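/- arXiv:2511.07020 — 18 statements merged into one kernel-verified Lean document; each statement's English description precedes it below -/
import Mathlib

section
/- Let k and m be positive integers, let ζ_k = exp(2πi/k), and let H be a Butson Hadamard matrix in BH(mk, k) whose first k rows equal F_k ⊗ j_m; that is, for 0 ≤ i ≤ k−1 and 0 ≤ c ≤ k−1, every entry of H in row i and in the c-th block of m consecutive columns equals ζ_k^{ic}. Then for every block index c₀ ∈ {0,…,k−1} and every k-th root of unity ω, the matrix K obtained from H by multiplying each entry lying simultaneously in the first k rows and in the c₀-th block of m consecutive columns by ω is again a Butson Hadamard matrix in BH(mk, k). -/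
/-!
Orthogonality of a lower row `r` to the `k` Fourier rows says that the vector of conjugated
block sums `(∑ⱼ conj H r (c, j))_c` is annihilated by the Fourier (Vandermonde) matrix, which is
invertible; so every lower row has vanishing block sums. The switched rows are still constant
on blocks, hence still orthogonal to every lower row, and inner products among the top rows are
unchanged because `ω * conj ω = 1`.
-/

open Finset Matrix

theorem IsPrimitiveRoot.eq_zero_of_forall_sum_pow_mul_eq_zero {R : Type*} [CommRing R]
    [IsDomain R] {ζ : R} {k : ℕ} (hζ : IsPrimitiveRoot ζ k) {x : Fin k → R}
    (hx : ∀ i : Fin k, ∑ c : Fin k, ζ ^ ((i : ℕ) * c) * x c = 0) : x = 0 := by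
  have hinj : Function.Injective fun c : Fin k => ζ ^ (c : ℕ) :=
    fun c c' h => Fin.ext (hζ.pow_inj c.isLt c'.isLt h)
  refine eq_zero_of_vecMul_eq_zero (det_vandermonde_ne_zero_iff.mpr hinj) (funext fun i => ?_)
  simpa [vecMul, dotProduct, vandermonde_apply, ← pow_mul, mul_comm] using hx i

theorem IsPrimitiveRoot.sum_block_eq_zero {R : Type*} [CommRing R] [IsDomain R] {ζ : R}
    {k : ℕ} (hζ : IsPrimitiveRoot ζ k) {β : Type*} [Fintype β] {v : Fin k × β → R}
    (hv : ∀ i : Fin k, ∑ x, ζ ^ ((i : ℕ) * x.1) * v x = 0) (c : Fin k) :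
    ∑ j, v (c, j) = 0 := by
  refine congrFun (hζ.eq_zero_of_forall_sum_pow_mul_eq_zero (x := fun c => ∑ j, v (c, j))
    fun i => ?_) c
  simpa only [Fintype.sum_prod_type, mul_sum] using hv i

theorem sum_mul_eq_zero_of_block_const {R : Type*} [CommSemiring R] {κ β : Type*} [Fintype κ]
    [Fintype β] {u v : κ × β → R} (f : κ → R) (hu : ∀ c j, u (c, j) = f c)
    (hv : ∀ c, ∑ j, v (c, j) = 0) : ∑ x, u x * v x = 0 := by
  simp [Fintype.sum_prod_type, hu, ← mul_sum, hv]

theorem Complex.mul_conj_eq_one_of_pow_eq_one {ω : ℂ} {k : ℕ} (hω : ω ^ k = 1) (hk : k ≠ 0) :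
    ω * (starRingEnd ℂ) ω = 1 := by
  rw [RCLike.mul_conj, Complex.norm_eq_one_of_pow_eq_one hω hk]
  norm_num

theorem stmt_0_general (k m : ℕ) (hk : 0 < k)
    (ζ : ℂ) (hζ : ζ = Complex.exp (2 * Real.pi * Complex.I / k))
    (H : Matrix (Fin k ⊕ Fin ((m - 1) * k)) (Fin k × Fin m) ℂ)
    (hent : ∀ r c, H r c ^ k = 1)
    (hHad : H * H.conjTranspose = ((m * k : ℕ) : ℂ) • 1)
    (hrows : ∀ (i : Fin k) (c : Fin k) (j : Fin m),
      H (Sum.inl i) (c, j) = ζ ^ ((i : ℕ) * (c : ℕ)))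
    (c₀ : Fin k) (ω : ℂ) (hω : ω ^ k = 1)
    (K : Matrix (Fin k ⊕ Fin ((m - 1) * k)) (Fin k × Fin m) ℂ)
    (hK₁ : ∀ (i : Fin k) (c : Fin k) (j : Fin m),
      K (Sum.inl i) (c, j) = if c = c₀ then ω * H (Sum.inl i) (c, j) else H (Sum.inl i) (c, j))
    (hK₂ : ∀ (r : Fin ((m - 1) * k)) (c : Fin k × Fin m), K (Sum.inr r) c = H (Sum.inr r) c) :
    (∀ r c, K r c ^ k = 1) ∧ K * K.conjTranspose = ((m * k : ℕ) : ℂ) • 1 := by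
  have hprim : IsPrimitiveRoot ζ k := hζ ▸ Complex.isPrimitiveRoot_exp k hk.ne'
  have hKtop (i c : Fin k) (j : Fin m) :
      K (Sum.inl i) (c, j) = (if c = c₀ then ω else 1) * ζ ^ ((i : ℕ) * c) := by
    rw [hK₁, hrows]; split_ifs <;> simp
  have hblock_conj (s : Fin ((m - 1) * k)) (c : Fin k) :
      ∑ j, (starRingEnd ℂ) (H (Sum.inr s) (c, j)) = 0 :=
    hprim.sum_block_eq_zero (fun i => by
      simpa [mul_apply, hrows] using congrFun (congrFun hHad (Sum.inl i)) (Sum.inr s)) c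
  have hblock (s : Fin ((m - 1) * k)) (c : Fin k) : ∑ j, H (Sum.inr s) (c, j) = 0 := by
    simpa using congrArg (starRingEnd ℂ) (hblock_conj s c)
  refine ⟨?_, ?_⟩
  · rintro (i | s) ⟨c, j⟩
    · rw [hK₁]; split_ifs
      · rw [mul_pow, hω, one_mul, hent]
      · exact hent _ _
    · rw [hK₂, hent]
  rw [← hHad]
  ext (i | s) (i' | s') <;> simp only [mul_apply, conjTranspose_apply, ← starRingEnd_apply]
  · refine sum_congr rfl fun ⟨c, j⟩ _ => ?_
    rw [hK₁, hK₁]; split_ifs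
    · rw [map_mul, mul_mul_mul_comm, Complex.mul_conj_eq_one_of_pow_eq_one hω hk.ne', one_mul]
    · rfl
  · simp only [hK₂]
    rw [sum_mul_eq_zero_of_block_const _ (hKtop i) (hblock_conj s'),
      sum_mul_eq_zero_of_block_const _ (hrows i) (hblock_conj s')]
  · simp only [hK₂, mul_comm (H (Sum.inr s) _)]
    rw [sum_mul_eq_zero_of_block_const _ (fun c j => by rw [hKtop i' c j]) (hblock s),
      sum_mul_eq_zero_of_block_const _ (fun c j => by rw [hrows i' c j]) (hblock s)]
  · simp only [hK₂]

/-- Switching a Fourier set: if `H ∈ BH(mk, k)` has its first `k` rows equal to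
`F_k ⊗ j_m`, then multiplying the entries lying in the first `k` rows and the
`c₀`-th block of `m` columns by a `k`-th root of unity `ω` yields a matrix in
`BH(mk, k)`. Rows are indexed by `Fin k ⊕ Fin ((m-1)*k)` (first `k` rows, then the
rest) and columns by `Fin k × Fin m` (block index, position within the block). -/
theorem stmt_0 (k m : ℕ) (hk : 0 < k) (hm : 0 < m)
    (ζ : ℂ) (hζ : ζ = Complex.exp (2 * Real.pi * Complex.I / k))
    (H : Matrix (Fin k ⊕ Fin ((m - 1) * k)) (Fin k × Fin m) ℂ)
    (hent : ∀ r c, H r c ^ k = 1)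
    (hHad : H * H.conjTranspose = ((m * k : ℕ) : ℂ) • 1)
    (hrows : ∀ (i : Fin k) (c : Fin k) (j : Fin m),
      H (Sum.inl i) (c, j) = ζ ^ ((i : ℕ) * (c : ℕ)))
    (c₀ : Fin k) (ω : ℂ) (hω : ω ^ k = 1)
    (K : Matrix (Fin k ⊕ Fin ((m - 1) * k)) (Fin k × Fin m) ℂ)
    (hK₁ : ∀ (i : Fin k) (c : Fin k) (j : Fin m),
      K (Sum.inl i) (c, j) = if c = c₀ then ω * H (Sum.inl i) (c, j) else H (Sum.inl i) (c, j))
    (hK₂ : ∀ (r : Fin ((m - 1) * k)) (c : Fin k × Fin m), K (Sum.inr r) c = H (Sum.inr r) c) :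
    (∀ r c, K r c ^ k = 1) ∧ K * K.conjTranspose = ((m * k : ℕ) : ℂ) • 1 :=
  stmt_0_general k m hk ζ hζ H hent hHad hrows c₀ ω hω K hK₁ hK₂
end

section
/- Let k and n be positive integers and ζ = exp(2πi/k). Let s₀,…,s_{k−1} be k-th roots of unity such that the circulant matrix S = circ(s₀,…,s_{k−1}), with (i,i′) entry s_{(i′−i) mod k}, is a Butson Hadamard matrix in BH(k,k), and set λ_m = Σ_{j=0}^{k−1} s_j ζ^{jm} for 0 ≤ m ≤ k−1. Let H ∈ BH(kn+k, k) have rows and columns indexed by the disjoint union {0,…,k−1} ⊔ ({0,…,k−1} × {0,…,n−1}) and satisfy: the top-left k × k block equals S; H(i, (c,u)) = ζ^{ic} for all i, c, u (top-right block equals F_k ⊗ j_n); and H((c,u), i) = ζ^{−ic} for all i, c, u (bottom-left block equals F_k* ⊗ j_nᵀ). Write A_{m,j} for the n × n block (H((m,t), (j,u)))_{t,u}. Then for all m and j: every row sum and every column sum of A_{m,j} equals 0 when j ≠ m, and every row sum and every column sum of A_{m,m} equals −conj(λ_m). -/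
/-!
Let `R_j` be the sum of row `t` of the block `A_{m,j}`. Orthogonality of row `(m,t)` of `H` to
the top row `i` reads `Σ_j R_j conj(ζ^{ij}) = -conj(Σ_c s_{c-i} ζ^{cm})`, and since the columns of
`F_k` are eigenvectors of `circ(s)`, the right-hand side is `-conj(λ_m) conj(ζ^{im})`. As `F_k*` is
invertible, `R = -conj(λ_m) e_m`. The column sums follow by running the same argument on `H*`,
which has the same border with `s` replaced by `d ↦ conj(s_{-d})`, whose eigenvalues are `conj λ_m`.
-/

open Matrix

lemma Complex.star_eq_inv_of_pow_eq_one {k : ℕ} {ζ : ℂ} (hζ : ζ ^ k = 1) (hk : k ≠ 0) :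
    star ζ = ζ⁻¹ :=
  (Complex.inv_eq_conj (Complex.norm_eq_one_of_pow_eq_one hζ hk)).symm

lemma Matrix.conjTranspose_mul_self_eq_smul_one {ι K : Type*} [Fintype ι] [DecidableEq ι]
    [Field K] [StarRing K] {A : Matrix ι ι K} {d : K} (hd : d ≠ 0) (h : A * Aᴴ = d • 1) :
    Aᴴ * A = d • 1 := by
  have h' : (d⁻¹ • Aᴴ) * A = 1 :=
    mul_eq_one_comm.mp (by rw [Matrix.mul_smul, h, smul_smul, inv_mul_cancel₀ hd, one_smul])
  rw [← inv_smul_eq_iff₀ hd, ← Matrix.smul_mul, h']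

lemma Fin.sum_pow_eq_ite {K : Type*} [Field K] [DecidableEq K] {k : ℕ} {w : K}
    (hw : w ^ k = 1) :
    ∑ i : Fin k, w ^ (i : ℕ) = if w = 1 then (k : K) else 0 := by
  rw [Fin.sum_univ_eq_sum_range (w ^ ·) k]
  split_ifs with h
  · simp [h]
  · rw [geom_sum_eq h k, hw, sub_self, zero_div]

def fourierMatrix (k : ℕ) (ζ : ℂ) : Matrix (Fin k) (Fin k) ℂ :=
  Matrix.of fun i c => ζ ^ ((i : ℕ) * (c : ℕ))

def circulantEigenvalue {k : ℕ} (ζ : ℂ) (s : Fin k → ℂ) (m : Fin k) : ℂ :=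
  ∑ j, s j * ζ ^ ((j : ℕ) * m)

section RootOfUnity

variable {k : ℕ} {ζ : ℂ}

lemma pow_finVal_add_mul (hζ : ζ ^ k = 1) (a b : Fin k) (x : ℕ) :
    ζ ^ (((a + b : Fin k) : ℕ) * x) = ζ ^ ((a : ℕ) * x) * ζ ^ ((b : ℕ) * x) := by
  rw [← pow_add, ← add_mul, Fin.val_add]
  exact pow_eq_pow_of_modEq ((Nat.mod_modEq _ k).mul_right x) hζ

lemma sum_sub_mul_pow_eq_circulantEigenvalue (hζ : ζ ^ k = 1) [NeZero k] (s : Fin k → ℂ)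
    (i m : Fin k) :
    ∑ c, s (c - i) * ζ ^ ((c : ℕ) * m) = ζ ^ ((i : ℕ) * m) * circulantEigenvalue ζ s m := by
  rw [circulantEigenvalue, Finset.mul_sum]
  refine Fintype.sum_equiv (Equiv.subRight i) _ _ fun c => ?_
  have hc := pow_finVal_add_mul hζ (c - i) i m
  rw [sub_add_cancel] at hc
  rw [Equiv.subRight_apply, hc]
  ring

lemma pow_finVal_neg_mul (hζ : ζ ^ k = 1) [NeZero k] (a : Fin k) (x : ℕ) :
    ζ ^ (((-a : Fin k) : ℕ) * x) = (ζ ^ ((a : ℕ) * x))⁻¹ := by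
  refine eq_inv_of_mul_eq_one_left ?_
  rw [← pow_finVal_add_mul hζ, neg_add_cancel, Fin.val_zero, zero_mul, pow_zero]

lemma circulantEigenvalue_star_neg (hζ : ζ ^ k = 1) [NeZero k] (s : Fin k → ℂ) (m : Fin k) :
    circulantEigenvalue ζ (fun d => star (s (-d))) m = star (circulantEigenvalue ζ s m) := by
  rw [circulantEigenvalue, circulantEigenvalue, star_sum]
  refine Fintype.sum_equiv (Equiv.neg (Fin k)) _ _ fun j => ?_
  rw [Equiv.neg_apply, star_mul', pow_finVal_neg_mul hζ, star_inv₀, star_pow,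
    Complex.star_eq_inv_of_pow_eq_one hζ (NeZero.ne k), inv_pow, inv_inv]

end RootOfUnity

namespace IsPrimitiveRoot

variable {k : ℕ} {ζ : ℂ}

lemma fourierMatrix_mul_conjTranspose (hζ : IsPrimitiveRoot ζ k) :
    fourierMatrix k ζ * (fourierMatrix k ζ)ᴴ = (k : ℂ) • 1 := by
  rcases Nat.eq_zero_or_pos k with rfl | hk
  · exact Subsingleton.elim _ _
  ext a b
  have hstar := Complex.star_eq_inv_of_pow_eq_one hζ.pow_eq_one hk.ne'
  set w := ζ ^ (a : ℕ) * (ζ ^ (b : ℕ))⁻¹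
  have hterm : ∀ i : Fin k, ζ ^ ((a : ℕ) * i) * star (ζ ^ ((b : ℕ) * i)) = w ^ (i : ℕ) := by
    intro i
    simp only [w, star_pow, hstar, inv_pow, mul_pow, pow_mul]
  have hw : w ^ k = 1 := by
    rw [mul_pow, inv_pow, pow_right_comm, hζ.pow_eq_one, one_pow, pow_right_comm,
      hζ.pow_eq_one, one_pow, inv_one, mul_one]
  have hw1 : w = 1 ↔ a = b := by
    rw [mul_inv_eq_one₀ (pow_ne_zero _ (hζ.ne_zero hk.ne')), Fin.ext_iff]
    exact ⟨fun h => hζ.pow_inj a.isLt b.isLt h, fun h => h ▸ rfl⟩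
  simp only [mul_apply, conjTranspose_apply, fourierMatrix, of_apply, hterm,
    Fin.sum_pow_eq_ite hw, hw1, Matrix.smul_apply, one_apply, smul_eq_mul, mul_ite, mul_one,
    mul_zero]

lemma eq_single_of_sum_mul_star_eq (hζ : IsPrimitiveRoot ζ k) {R : Fin k → ℂ} {m : Fin k}
    {μ : ℂ}
    (h : ∀ i : Fin k, ∑ j, R j * star (ζ ^ ((i : ℕ) * j)) = μ * star (ζ ^ ((i : ℕ) * m))) :
    R = Pi.single m μ := by
  have hk : (k : ℂ) ≠ 0 := Nat.cast_ne_zero.mpr m.pos.ne'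
  have hunit : IsUnit (fourierMatrix k ζ)ᴴ := by
    refine IsUnit.of_mul_eq_one_right ((k : ℂ)⁻¹ • fourierMatrix k ζ) ?_
    rw [Matrix.smul_mul, hζ.fourierMatrix_mul_conjTranspose, smul_smul, inv_mul_cancel₀ hk,
      one_smul]
  refine vecMul_injective_of_isUnit hunit (funext fun i => ?_)
  simp only [single_vecMul]
  simpa [vecMul, dotProduct, fourierMatrix] using h i

end IsPrimitiveRoot

/-- `H = [[circ(s), F_k ⊗ j_n], [F_k* ⊗ j_nᵀ, *]]`. -/
structure HasFourierBorder {k n : ℕ} (ζ : ℂ) (s : Fin k → ℂ)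
    (H : Matrix (Fin k ⊕ Fin k × Fin n) (Fin k ⊕ Fin k × Fin n) ℂ) : Prop where
  topLeft : ∀ i i', H (.inl i) (.inl i') = s (i' - i)
  topRight : ∀ i c u, H (.inl i) (.inr (c, u)) = ζ ^ ((i : ℕ) * c)
  bottomLeft : ∀ i c u, H (.inr (c, u)) (.inl i) = star (ζ ^ ((i : ℕ) * c))

namespace HasFourierBorder

variable {k n : ℕ} [NeZero k] {ζ : ℂ} {s : Fin k → ℂ}
  {H : Matrix (Fin k ⊕ Fin k × Fin n) (Fin k ⊕ Fin k × Fin n) ℂ}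

lemma conjTranspose (hB : HasFourierBorder ζ s H) :
    HasFourierBorder ζ (fun d => star (s (-d))) Hᴴ where
  topLeft i i' := by rw [conjTranspose_apply, hB.topLeft, neg_sub]
  topRight i c u := by rw [conjTranspose_apply, hB.bottomLeft, star_star]
  bottomLeft i c u := by rw [conjTranspose_apply, hB.topRight]

lemma blockRowSums_eq_single (hζ : IsPrimitiveRoot ζ k) (hB : HasFourierBorder ζ s H) {d : ℂ}
    (hH : H * Hᴴ = d • 1) (m : Fin k) (t : Fin n) :
    (fun j => ∑ u, H (.inr (m, t)) (.inr (j, u))) =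
      Pi.single m (-star (circulantEigenvalue ζ s m)) := by
  refine hζ.eq_single_of_sum_mul_star_eq fun i => ?_
  have horth : (H * Hᴴ) (.inr (m, t)) (.inl i) = 0 := by simp [hH]
  rw [mul_apply, Fintype.sum_sum_type, Fintype.sum_prod_type] at horth
  simp only [conjTranspose_apply, hB.topLeft, hB.topRight, hB.bottomLeft, ← Finset.sum_mul]
    at horth
  have hcirc : ∑ c : Fin k, star (ζ ^ ((c : ℕ) * m)) * star (s (c - i)) =
      star (ζ ^ ((i : ℕ) * m)) * star (circulantEigenvalue ζ s m) := by
    rw [← star_mul', ← sum_sub_mul_pow_eq_circulantEigenvalue hζ.pow_eq_one, star_sum]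
    simp only [star_mul]
  rw [hcirc] at horth
  linear_combination horth

lemma blockColSums_eq_single (hζ : IsPrimitiveRoot ζ k) (hB : HasFourierBorder ζ s H) {d : ℂ}
    (hd : d ≠ 0) (hH : H * Hᴴ = d • 1) (j : Fin k) (u : Fin n) :
    (fun m => ∑ t, H (.inr (m, t)) (.inr (j, u))) =
      Pi.single j (-star (circulantEigenvalue ζ s j)) := by
  have hH' : Hᴴ * Hᴴᴴ = d • 1 := by
    rw [conjTranspose_conjTranspose, conjTranspose_mul_self_eq_smul_one hd hH]
  funext m
  have hrow := congrArg star (congrFun (hB.conjTranspose.blockRowSums_eq_single hζ hH' j u) m)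
  simp only [conjTranspose_apply, star_sum, star_star,
    circulantEigenvalue_star_neg hζ.pow_eq_one] at hrow
  rw [hrow, ← star_neg, Pi.single_star, Pi.star_apply]

end HasFourierBorder

theorem stmt_3_general (k n : ℕ) (hk : 0 < k)
    (ζ : ℂ) (hζ : ζ = Complex.exp (2 * Real.pi * Complex.I / k))
    (s : Fin k → ℂ)
    (S : Matrix (Fin k) (Fin k) ℂ) (hS : ∀ i i', S i i' = s (i' - i))
    (lam : Fin k → ℂ)
    (hlam : ∀ m : Fin k, lam m = ∑ j : Fin k, s j * ζ ^ ((j : ℕ) * (m : ℕ)))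
    (H : Matrix (Fin k ⊕ Fin k × Fin n) (Fin k ⊕ Fin k × Fin n) ℂ)
    (hHad : H * H.conjTranspose = ((k * n + k : ℕ) : ℂ) • 1)
    (hTL : ∀ i i' : Fin k, H (Sum.inl i) (Sum.inl i') = S i i')
    (hTR : ∀ (i c : Fin k) (u : Fin n),
      H (Sum.inl i) (Sum.inr (c, u)) = ζ ^ ((i : ℕ) * (c : ℕ)))
    (hBL : ∀ (i c : Fin k) (u : Fin n),
      H (Sum.inr (c, u)) (Sum.inl i) = (starRingEnd ℂ) (ζ ^ ((i : ℕ) * (c : ℕ)))) :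
    ∀ m j : Fin k,
      (j ≠ m →
        (∀ t : Fin n, ∑ u : Fin n, H (Sum.inr (m, t)) (Sum.inr (j, u)) = 0) ∧
        (∀ u : Fin n, ∑ t : Fin n, H (Sum.inr (m, t)) (Sum.inr (j, u)) = 0)) ∧
      (j = m →
        (∀ t : Fin n, ∑ u : Fin n, H (Sum.inr (m, t)) (Sum.inr (j, u)) =
          -(starRingEnd ℂ) (lam m)) ∧
        (∀ u : Fin n, ∑ t : Fin n, H (Sum.inr (m, t)) (Sum.inr (j, u)) =
          -(starRingEnd ℂ) (lam m))) := by
  have : NeZero k := ⟨hk.ne'⟩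
  have hprim : IsPrimitiveRoot ζ k := hζ ▸ Complex.isPrimitiveRoot_exp k hk.ne'
  have hB : HasFourierBorder ζ s H := ⟨fun i i' => (hTL i i').trans (hS i i'), hTR, hBL⟩
  have hd : ((k * n + k : ℕ) : ℂ) ≠ 0 := Nat.cast_ne_zero.mpr (by omega)
  obtain rfl : lam = circulantEigenvalue ζ s := funext hlam
  intro m j
  have hrow t := congrFun (hB.blockRowSums_eq_single hprim hHad m t) j
  have hcol u := congrFun (hB.blockColSums_eq_single hprim hd hHad j u) m
  refine ⟨fun hjm => ⟨fun t => ?_, fun u => ?_⟩, ?_⟩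
  · rw [hrow, Pi.single_eq_of_ne hjm]
  · rw [hcol, Pi.single_eq_of_ne (Ne.symm hjm)]
  · rintro rfl
    exact ⟨fun t => by rw [hrow, Pi.single_eq_same, starRingEnd_apply],
      fun u => by rw [hcol, Pi.single_eq_same, starRingEnd_apply]⟩

/-- Theorem on generalised Hall sets: if `H ∈ BH(kn+k, k)` has circulant top-left block
`S = circ(s₀,…,s_{k-1}) ∈ BH(k,k)` with eigenvalues `λ_m`, top-right block `F_k ⊗ j_n`
and bottom-left block `F_k* ⊗ j_nᵀ`, then the `n × n` blocks `A_{m,j}` of the bottom-right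
part have all row and column sums equal to `0` when `j ≠ m`, and equal to `-conj(λ_m)`
when `j = m`. Rows and columns are indexed by `Fin k ⊕ (Fin k × Fin n)`. -/
theorem stmt_3 (k n : ℕ) (hk : 0 < k) (hn : 0 < n)
    (ζ : ℂ) (hζ : ζ = Complex.exp (2 * Real.pi * Complex.I / k))
    (s : Fin k → ℂ) (hs : ∀ j, s j ^ k = 1)
    (S : Matrix (Fin k) (Fin k) ℂ) (hS : ∀ i i', S i i' = s (i' - i))
    (hSHad : S * S.conjTranspose = (k : ℂ) • 1)
    (lam : Fin k → ℂ)
    (hlam : ∀ m : Fin k, lam m = ∑ j : Fin k, s j * ζ ^ ((j : ℕ) * (m : ℕ)))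
    (H : Matrix (Fin k ⊕ Fin k × Fin n) (Fin k ⊕ Fin k × Fin n) ℂ)
    (hent : ∀ r c, H r c ^ k = 1)
    (hHad : H * H.conjTranspose = ((k * n + k : ℕ) : ℂ) • 1)
    (hTL : ∀ i i' : Fin k, H (Sum.inl i) (Sum.inl i') = S i i')
    (hTR : ∀ (i c : Fin k) (u : Fin n),
      H (Sum.inl i) (Sum.inr (c, u)) = ζ ^ ((i : ℕ) * (c : ℕ)))
    (hBL : ∀ (i c : Fin k) (u : Fin n),
      H (Sum.inr (c, u)) (Sum.inl i) = (starRingEnd ℂ) (ζ ^ ((i : ℕ) * (c : ℕ)))) :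
    ∀ m j : Fin k,
      (j ≠ m →
        (∀ t : Fin n, ∑ u : Fin n, H (Sum.inr (m, t)) (Sum.inr (j, u)) = 0) ∧
        (∀ u : Fin n, ∑ t : Fin n, H (Sum.inr (m, t)) (Sum.inr (j, u)) = 0)) ∧
      (j = m →
        (∀ t : Fin n, ∑ u : Fin n, H (Sum.inr (m, t)) (Sum.inr (j, u)) =
          -(starRingEnd ℂ) (lam m)) ∧
        (∀ u : Fin n, ∑ t : Fin n, H (Sum.inr (m, t)) (Sum.inr (j, u)) =
          -(starRingEnd ℂ) (lam m))) :=
  stmt_3_general k n hk ζ hζ s S hS lam hlam H hHad hTL hTR hBL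
end

section
/- Let k and n be positive integers and ζ = exp(2πi/k). Let s₀,…,s_{k−1} be k-th roots of unity such that the circulant matrix S = circ(s₀,…,s_{k−1}) is a Butson Hadamard matrix in BH(k,k). Let H ∈ BH(kn+k, k) have rows and columns indexed by {0,…,k−1} ⊔ ({0,…,k−1} × {0,…,n−1}) with top-left k × k block equal to S, with H(i, (c,u)) = ζ^{ic}, and with H((c,u), i) = ζ^{−ic} for all i, c, u. Fix m ∈ {0,…,k−1} and a k-th root of unity ω, and let K be the matrix obtained from H by multiplying each entry H(i, (m,u)) (for i ∈ {0,…,k−1} and 0 ≤ u ≤ n−1) by ω and each entry H((m,u), i) by conj(ω), leaving all other entries unchanged. Then K is a Butson Hadamard matrix in BH(kn+k, k). -/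
/-!
As `|ω| = 1`, the diagonal blocks of `K Kᴴ` agree with those of `H Hᴴ`; in the bottom-right
block this uses that the rows `(c, u)` and `(c', u')` of the bottom-left block are orthogonal
characters when `c ≠ c'`. For the top-right block, the Fourier vector `(ζ ^ (j c'))_j` is an
eigenvector of the circulant `S`, with eigenvalue `μ` say, so orthogonality of the rows `i` and
`(c', u')` of `H` says that `∑_c ζ ^ (i c) (∑_u conj H((c', u'), (c, u)) + δ_{c c'} μ) = 0` for
every `i`. Inverting the Fourier matrix, the block sums `∑_u H((c', u'), (c, u))` vanish for
`c ≠ c'`, so only the block `c = c'` contributes to `(K Kᴴ)(i, (c', u'))`, which is therefore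
`ω` or `1` times `(H Hᴴ)(i, (c', u')) = 0`.
-/

open Complex ComplexConjugate Finset Matrix Sum

theorem Complex.conj_eq_inv_of_pow_eq_one {z : ℂ} {p : ℕ} (hp : p ≠ 0) (hz : z ^ p = 1) :
    conj z = z⁻¹ :=
  (inv_eq_conj (norm_eq_one_of_pow_eq_one hz hp)).symm

theorem Complex.conj_mul_self_of_pow_eq_one {z : ℂ} {p : ℕ} (hp : p ≠ 0) (hz : z ^ p = 1) :
    conj z * z = 1 := by
  rw [conj_mul', norm_eq_one_of_pow_eq_one hz hp]
  norm_num

namespace IsPrimitiveRoot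

variable {ζ : ℂ} {k : ℕ}

theorem sum_pow_mul_conj_pow (hζ : IsPrimitiveRoot ζ k) (a b : Fin k) :
    ∑ i : Fin k, ζ ^ ((i : ℕ) * a) * conj (ζ ^ ((i : ℕ) * b))
      = if a = b then (k : ℂ) else 0 := by
  have hk : k ≠ 0 := a.pos.ne'
  have hζ0 : ζ ≠ 0 := hζ.ne_zero hk
  set x := ζ ^ (a : ℕ) * ζ⁻¹ ^ (b : ℕ)
  have hterm (i : ℕ) : ζ ^ (i * (a : ℕ)) * conj (ζ ^ (i * (b : ℕ))) = x ^ i := by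
    rw [map_pow, conj_eq_inv_of_pow_eq_one hk hζ.pow_eq_one, mul_pow, ← pow_mul, ← pow_mul,
      mul_comm (a : ℕ), mul_comm (b : ℕ)]
  simp only [hterm, Fin.sum_univ_eq_sum_range (fun i => x ^ i)]
  split_ifs with hab
  · simp [x, hab, hζ0]
  · have hx1 : x ≠ 1 := fun h => hab <| Fin.ext <| hζ.pow_inj a.isLt b.isLt <|
      (mul_inv_eq_one₀ (pow_ne_zero _ hζ0)).mp (by rwa [← inv_pow])
    have hxk : x ^ k = 1 := by
      rw [mul_pow, ← pow_mul, ← pow_mul, pow_mul', pow_mul' ζ⁻¹, inv_pow, hζ.pow_eq_one,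
        one_pow, inv_one, one_pow, mul_one]
    rw [geom_sum_eq hx1, hxk, sub_self, zero_div]

theorem eq_zero_of_forall_sum_pow_mul_eq_zero_s4 (hζ : IsPrimitiveRoot ζ k) {v : Fin k → ℂ}
    (hv : ∀ i : Fin k, ∑ c : Fin k, ζ ^ ((i : ℕ) * c) * v c = 0) : v = 0 := by
  funext b
  have hk : (k : ℂ) ≠ 0 := Nat.cast_ne_zero.mpr b.pos.ne'
  have key : ∑ i : Fin k, (∑ c : Fin k, ζ ^ ((i : ℕ) * c) * v c) * conj (ζ ^ ((i : ℕ) * b))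
      = k * v b := by
    simp only [sum_mul]
    rw [sum_comm]
    simp only [mul_right_comm _ (v _), ← sum_mul, hζ.sum_pow_mul_conj_pow, ite_mul, zero_mul,
      sum_ite_eq', mem_univ, if_true]
  simpa [hv, hk] using key.symm

theorem pow_val_add_mul (hζ : IsPrimitiveRoot ζ k) (i d : Fin k) (c : ℕ) :
    ζ ^ (((i + d : Fin k) : ℕ) * c) = ζ ^ ((i : ℕ) * c) * ζ ^ ((d : ℕ) * c) := by
  have hmod := pow_mod_orderOf ζ (i + d)
  rw [← hζ.eq_orderOf] at hmod
  rw [Fin.val_add, pow_mul, hmod, ← pow_mul, add_mul, pow_add]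

theorem sum_circulant_mul_pow (hζ : IsPrimitiveRoot ζ k) (s : Fin k → ℂ) (i c : Fin k) :
    ∑ j : Fin k, s (j - i) * ζ ^ ((j : ℕ) * c)
      = ζ ^ ((i : ℕ) * c) * ∑ d : Fin k, s d * ζ ^ ((d : ℕ) * c) := by
  have : NeZero k := ⟨i.pos.ne'⟩
  rw [mul_sum, ← Equiv.sum_comp (Equiv.addLeft i)]
  refine sum_congr rfl fun d _ => ?_
  rw [Equiv.coe_addLeft, add_sub_cancel_left, hζ.pow_val_add_mul]
  ring

end IsPrimitiveRoot

theorem Matrix.mul_conjTranspose_apply_sum_prod {ι α β : Type*} [Fintype α] [Fintype β]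
    (A B : Matrix ι (α ⊕ α × β) ℂ) (r r' : ι) :
    (A * Bᴴ) r r' = ∑ j, A r (inl j) * conj (B r' (inl j))
      + ∑ c, ∑ u, A r (inr (c, u)) * conj (B r' (inr (c, u))) := by
  simp [mul_apply, Fintype.sum_sum_type, Fintype.sum_prod_type]

section Switching

variable {k n : ℕ}

/-- The three prescribed blocks `circ(s)`, `F ⊗ j_nᵀ` and `F* ⊗ j_n` of a generalised Hall set,
with `F = (ζ ^ (i c))`. -/
structure IsHallForm (ζ : ℂ) (s : Fin k → ℂ)
    (H : Matrix (Fin k ⊕ Fin k × Fin n) (Fin k ⊕ Fin k × Fin n) ℂ) : Prop where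
  inl_inl : ∀ i i' : Fin k, H (inl i) (inl i') = s (i' - i)
  inl_inr : ∀ (i c : Fin k) (u : Fin n), H (inl i) (inr (c, u)) = ζ ^ ((i : ℕ) * c)
  inr_inl : ∀ (i c : Fin k) (u : Fin n), H (inr (c, u)) (inl i) = conj (ζ ^ ((i : ℕ) * c))

structure IsSwitch (w : Fin k → ℂ)
    (H K : Matrix (Fin k ⊕ Fin k × Fin n) (Fin k ⊕ Fin k × Fin n) ℂ) : Prop where
  inl_inl : ∀ i i' : Fin k, K (inl i) (inl i') = H (inl i) (inl i')
  inl_inr : ∀ (i c : Fin k) (u : Fin n), K (inl i) (inr (c, u)) = w c * H (inl i) (inr (c, u))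
  inr_inl : ∀ (i c : Fin k) (u : Fin n),
    K (inr (c, u)) (inl i) = conj (w c) * H (inr (c, u)) (inl i)
  inr_inr : ∀ (c c' : Fin k) (u u' : Fin n),
    K (inr (c, u)) (inr (c', u')) = H (inr (c, u)) (inr (c', u'))

variable {ζ : ℂ} {s : Fin k → ℂ} {w : Fin k → ℂ}
  {H K : Matrix (Fin k ⊕ Fin k × Fin n) (Fin k ⊕ Fin k × Fin n) ℂ}

theorem IsHallForm.sum_conj_inr_inr_eq_zero (hH : IsHallForm ζ s H) (hζ : IsPrimitiveRoot ζ k)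
    {c c' : Fin k} {u' : Fin n} (horth : ∀ i, (H * Hᴴ) (inl i) (inr (c', u')) = 0)
    (hc : c ≠ c') : ∑ u, conj (H (inr (c', u')) (inr (c, u))) = 0 := by
  set μ := ∑ d, s d * ζ ^ ((d : ℕ) * c')
  set v : Fin k → ℂ :=
    fun c => ∑ u, conj (H (inr (c', u')) (inr (c, u))) + if c = c' then μ else 0
  suffices v = 0 by simpa [v, hc] using congrFun this c
  refine hζ.eq_zero_of_forall_sum_pow_mul_eq_zero_s4 fun i => ?_
  have h := horth i
  rw [mul_conjTranspose_apply_sum_prod] at h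
  simp only [hH.inl_inl, hH.inr_inl, hH.inl_inr, conj_conj, hζ.sum_circulant_mul_pow,
    ← mul_sum] at h
  simp only [v, mul_add, sum_add_distrib, mul_ite, mul_zero, sum_ite_eq', mem_univ, if_true]
  linear_combination h

theorem IsSwitch.pow_eq_one {p : ℕ} (hK : IsSwitch w H K) (hw : ∀ c, w c ^ p = 1)
    (hH : ∀ r r', H r r' ^ p = 1) (r r' : Fin k ⊕ Fin k × Fin n) : K r r' ^ p = 1 := by
  rcases r with i | ⟨c, u⟩ <;> rcases r' with i' | ⟨c', u'⟩
  · rw [hK.inl_inl, hH]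
  · rw [hK.inl_inr, mul_pow, hw, hH, one_mul]
  · rw [hK.inr_inl, mul_pow, ← map_pow, hw, map_one, hH, one_mul]
  · rw [hK.inr_inr, hH]

theorem IsSwitch.mul_conjTranspose_inl_inl (hK : IsSwitch w H K)
    (hw : ∀ c, conj (w c) * w c = 1) (i i' : Fin k) :
    (K * Kᴴ) (inl i) (inl i') = (H * Hᴴ) (inl i) (inl i') := by
  simp only [mul_conjTranspose_apply_sum_prod, hK.inl_inl, hK.inl_inr, map_mul]
  congr 1
  refine sum_congr rfl fun c _ => sum_congr rfl fun u _ => ?_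
  linear_combination H (inl i) (inr (c, u)) * conj (H (inl i') (inr (c, u))) * hw c

theorem IsSwitch.mul_conjTranspose_inr_inr (hK : IsSwitch w H K)
    (hw : ∀ c, conj (w c) * w c = 1) (hH : IsHallForm ζ s H) (hζ : IsPrimitiveRoot ζ k)
    (c c' : Fin k) (u u' : Fin n) :
    (K * Kᴴ) (inr (c, u)) (inr (c', u')) = (H * Hᴴ) (inr (c, u)) (inr (c', u')) := by
  simp only [mul_conjTranspose_apply_sum_prod, hK.inr_inl, hK.inr_inr, map_mul, conj_conj]
  congr 1
  obtain rfl | hc := eq_or_ne c c'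
  · refine sum_congr rfl fun j _ => ?_
    linear_combination H (inr (c, u)) (inl j) * conj (H (inr (c, u')) (inl j)) * hw c
  · have hchar : ∑ j, H (inr (c, u)) (inl j) * conj (H (inr (c', u')) (inl j)) = 0 := by
      simp only [hH.inr_inl, conj_conj, mul_comm (conj _), hζ.sum_pow_mul_conj_pow,
        if_neg hc.symm]
    rw [hchar, ← mul_zero (conj (w c) * w c'), ← hchar, mul_sum]
    exact sum_congr rfl fun j _ => by ring

theorem IsSwitch.mul_conjTranspose_inl_inr (hK : IsSwitch w H K) (hH : IsHallForm ζ s H)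
    {c' : Fin k} {u' : Fin n}
    (hsum : ∀ c ≠ c', ∑ u, conj (H (inr (c', u')) (inr (c, u))) = 0) (i : Fin k) :
    (K * Kᴴ) (inl i) (inr (c', u')) = w c' * (H * Hᴴ) (inl i) (inr (c', u')) := by
  have hblock (c : Fin k) (hc : c ≠ c') :
      ∑ u, H (inl i) (inr (c, u)) * conj (H (inr (c', u')) (inr (c, u))) = 0 := by
    simp only [hH.inl_inr, ← mul_sum, hsum c hc, mul_zero]
  have hleft : ∑ j, K (inl i) (inl j) * conj (K (inr (c', u')) (inl j))
      = w c' * ∑ j, H (inl i) (inl j) * conj (H (inr (c', u')) (inl j)) := by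
    simp only [hK.inl_inl, hK.inr_inl, map_mul, conj_conj, mul_sum]
    exact sum_congr rfl fun j _ => by ring
  have hright (c : Fin k) :
      ∑ u, K (inl i) (inr (c, u)) * conj (K (inr (c', u')) (inr (c, u)))
        = w c * ∑ u, H (inl i) (inr (c, u)) * conj (H (inr (c', u')) (inr (c, u))) := by
    simp only [hK.inl_inr, hK.inr_inr, mul_sum, mul_assoc]
  have hweighted :
      ∑ c, w c * ∑ u, H (inl i) (inr (c, u)) * conj (H (inr (c', u')) (inr (c, u)))
        = w c' * ∑ c, ∑ u, H (inl i) (inr (c, u)) * conj (H (inr (c', u')) (inr (c, u))) := by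
    rw [Fintype.sum_eq_single c' fun c hc => by rw [hblock c hc, mul_zero],
      Fintype.sum_eq_single c' hblock]
  rw [mul_conjTranspose_apply_sum_prod, mul_conjTranspose_apply_sum_prod, hleft, mul_add]
  simp only [hright, hweighted]

theorem IsSwitch.mul_conjTranspose_eq (hK : IsSwitch w H K) (hw : ∀ c, conj (w c) * w c = 1)
    (hH : IsHallForm ζ s H) (hζ : IsPrimitiveRoot ζ k)
    (horth : ∀ i c' u', (H * Hᴴ) (inl i) (inr (c', u')) = 0) : K * Kᴴ = H * Hᴴ := by
  have hTR (i c' u') : (K * Kᴴ) (inl i) (inr (c', u')) = 0 := by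
    rw [hK.mul_conjTranspose_inl_inr hH
      (fun c hc => hH.sum_conj_inr_inr_eq_zero hζ (fun i => horth i c' u') hc), horth, mul_zero]
  ext (i | ⟨c, u⟩) (i' | ⟨c', u'⟩)
  · exact hK.mul_conjTranspose_inl_inl hw i i'
  · rw [hTR, horth]
  · rw [← (isHermitian_mul_conjTranspose_self K).apply,
      ← (isHermitian_mul_conjTranspose_self H).apply, hTR, horth]
  · exact hK.mul_conjTranspose_inr_inr hw hH hζ c c' u u'

end Switching

theorem stmt_4_general (k n : ℕ) (hk : 0 < k)
    (ζ : ℂ) (hζ : ζ = Complex.exp (2 * Real.pi * Complex.I / k))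
    (s : Fin k → ℂ)
    (S : Matrix (Fin k) (Fin k) ℂ) (hS : ∀ i i', S i i' = s (i' - i))
    (H : Matrix (Fin k ⊕ Fin k × Fin n) (Fin k ⊕ Fin k × Fin n) ℂ)
    (hent : ∀ r c, H r c ^ k = 1)
    (hHad : H * H.conjTranspose = ((k * n + k : ℕ) : ℂ) • 1)
    (hTL : ∀ i i' : Fin k, H (Sum.inl i) (Sum.inl i') = S i i')
    (hTR : ∀ (i c : Fin k) (u : Fin n),
      H (Sum.inl i) (Sum.inr (c, u)) = ζ ^ ((i : ℕ) * (c : ℕ)))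
    (hBL : ∀ (i c : Fin k) (u : Fin n),
      H (Sum.inr (c, u)) (Sum.inl i) = (starRingEnd ℂ) (ζ ^ ((i : ℕ) * (c : ℕ))))
    (m : Fin k) (ω : ℂ) (hω : ω ^ k = 1)
    (K : Matrix (Fin k ⊕ Fin k × Fin n) (Fin k ⊕ Fin k × Fin n) ℂ)
    (hKTL : ∀ i i' : Fin k, K (Sum.inl i) (Sum.inl i') = H (Sum.inl i) (Sum.inl i'))
    (hKTR : ∀ (i c : Fin k) (u : Fin n), K (Sum.inl i) (Sum.inr (c, u)) =
      if c = m then ω * H (Sum.inl i) (Sum.inr (c, u)) else H (Sum.inl i) (Sum.inr (c, u)))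
    (hKBL : ∀ (i c : Fin k) (u : Fin n), K (Sum.inr (c, u)) (Sum.inl i) =
      if c = m then (starRingEnd ℂ) ω * H (Sum.inr (c, u)) (Sum.inl i)
      else H (Sum.inr (c, u)) (Sum.inl i))
    (hKBR : ∀ (c c' : Fin k) (u u' : Fin n),
      K (Sum.inr (c, u)) (Sum.inr (c', u')) = H (Sum.inr (c, u)) (Sum.inr (c', u'))) :
    (∀ r c, K r c ^ k = 1) ∧ K * K.conjTranspose = ((k * n + k : ℕ) : ℂ) • 1 := by
  have hprim : IsPrimitiveRoot ζ k := hζ ▸ Complex.isPrimitiveRoot_exp k hk.ne'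
  set w : Fin k → ℂ := fun c => if c = m then ω else 1
  have hw_pow (c : Fin k) : w c ^ k = 1 := by
    by_cases hc : c = m <;> simp [w, hc, hω]
  have hw (c : Fin k) : conj (w c) * w c = 1 := conj_mul_self_of_pow_eq_one hk.ne' (hw_pow c)
  have hHall : IsHallForm ζ s H := ⟨fun i i' => by rw [hTL, hS], hTR, hBL⟩
  have hswitch : IsSwitch w H K := by
    refine ⟨hKTL, fun i c u => ?_, fun i c u => ?_, hKBR⟩
    · by_cases hc : c = m <;> simp [hKTR, w, hc]
    · by_cases hc : c = m <;> simp [hKBL, w, hc]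
  have horth (i : Fin k) (c' : Fin k) (u' : Fin n) : (H * Hᴴ) (inl i) (inr (c', u')) = 0 := by
    simp [hHad]
  exact ⟨hswitch.pow_eq_one hw_pow hent,
    by rw [hswitch.mul_conjTranspose_eq hw hHall hprim horth, hHad]⟩

/-- Switching a generalised Hall set: if `H ∈ BH(kn+k, k)` has circulant top-left block
`S ∈ BH(k,k)`, top-right block `F_k ⊗ j_n` and bottom-left block `F_k* ⊗ j_nᵀ`, then
multiplying the `m`-th block of the top-right part by a `k`-th root of unity `ω` and the
`m`-th block of the bottom-left part by `conj ω` yields a matrix in `BH(kn+k, k)`. -/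
theorem stmt_4 (k n : ℕ) (hk : 0 < k) (hn : 0 < n)
    (ζ : ℂ) (hζ : ζ = Complex.exp (2 * Real.pi * Complex.I / k))
    (s : Fin k → ℂ) (hs : ∀ j, s j ^ k = 1)
    (S : Matrix (Fin k) (Fin k) ℂ) (hS : ∀ i i', S i i' = s (i' - i))
    (hSHad : S * S.conjTranspose = (k : ℂ) • 1)
    (H : Matrix (Fin k ⊕ Fin k × Fin n) (Fin k ⊕ Fin k × Fin n) ℂ)
    (hent : ∀ r c, H r c ^ k = 1)
    (hHad : H * H.conjTranspose = ((k * n + k : ℕ) : ℂ) • 1)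
    (hTL : ∀ i i' : Fin k, H (Sum.inl i) (Sum.inl i') = S i i')
    (hTR : ∀ (i c : Fin k) (u : Fin n),
      H (Sum.inl i) (Sum.inr (c, u)) = ζ ^ ((i : ℕ) * (c : ℕ)))
    (hBL : ∀ (i c : Fin k) (u : Fin n),
      H (Sum.inr (c, u)) (Sum.inl i) = (starRingEnd ℂ) (ζ ^ ((i : ℕ) * (c : ℕ))))
    (m : Fin k) (ω : ℂ) (hω : ω ^ k = 1)
    (K : Matrix (Fin k ⊕ Fin k × Fin n) (Fin k ⊕ Fin k × Fin n) ℂ)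
    (hKTL : ∀ i i' : Fin k, K (Sum.inl i) (Sum.inl i') = H (Sum.inl i) (Sum.inl i'))
    (hKTR : ∀ (i c : Fin k) (u : Fin n), K (Sum.inl i) (Sum.inr (c, u)) =
      if c = m then ω * H (Sum.inl i) (Sum.inr (c, u)) else H (Sum.inl i) (Sum.inr (c, u)))
    (hKBL : ∀ (i c : Fin k) (u : Fin n), K (Sum.inr (c, u)) (Sum.inl i) =
      if c = m then (starRingEnd ℂ) ω * H (Sum.inr (c, u)) (Sum.inl i)
      else H (Sum.inr (c, u)) (Sum.inl i))
    (hKBR : ∀ (c c' : Fin k) (u u' : Fin n),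
      K (Sum.inr (c, u)) (Sum.inr (c', u')) = H (Sum.inr (c, u)) (Sum.inr (c', u'))) :
    (∀ r c, K r c ^ k = 1) ∧ K * K.conjTranspose = ((k * n + k : ℕ) : ℂ) • 1 :=
  stmt_4_general k n hk ζ hζ s S hS H hent hHad hTL hTR hBL m ω hω K hKTL hKTR hKBL hKBR
end

section
/- Let H be a real Hadamard matrix of order n, let {R, R₁} be a partition of its set of rows and {C, C₁} a partition of its set of columns, such that: (1) the submatrix of H with rows from R₁ and columns from C has constant columns, i.e. H_{rj} = H_{sj} for all r, s ∈ R₁ and j ∈ C; and (2) every column of the submatrix of H with rows from R₁ and columns from C₁ sums to zero, i.e. Σ_{i∈R₁} H_{ij} = 0 for all j ∈ C₁. Let K be the matrix obtained from H by replacing H_{ij} with −H_{ij} for all (i,j) ∈ R₁ × C₁ and leaving all other entries unchanged. Then K is a real Hadamard matrix of order n. -/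
/-- Rank 1 switching of real Hadamard matrices (Theorem `des-had`): if the submatrix with
rows `R₁` and columns outside `C₁` has constant columns, and every column of the submatrix
with rows `R₁` and columns `C₁` sums to zero, then negating the `R₁ × C₁` submatrix yields
a real Hadamard matrix. Here `R = R₁ᶜ` and `C = C₁ᶜ`. -/
theorem stmt_5 (n : ℕ) (H : Matrix (Fin n) (Fin n) ℝ)
    (hent : ∀ i j, H i j = 1 ∨ H i j = -1)
    (hHad : H * H.transpose = (n : ℝ) • 1)
    (R₁ C₁ : Finset (Fin n))
    (h1 : ∀ r ∈ R₁, ∀ s ∈ R₁, ∀ j ∉ C₁, H r j = H s j)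
    (h2 : ∀ j ∈ C₁, ∑ i ∈ R₁, H i j = 0)
    (K : Matrix (Fin n) (Fin n) ℝ)
    (hK : ∀ i j, K i j = if i ∈ R₁ ∧ j ∈ C₁ then -H i j else H i j) :
    (∀ i j, K i j = 1 ∨ K i j = -1) ∧ K * K.transpose = (n : ℝ) • 1 := by
  have horth : ∀ a b : Fin n, ∑ j, H a j * H b j = if a = b then (n : ℝ) else 0 := by
    intro a b
    have := congrFun (congrFun hHad a) b
    simpa [Matrix.mul_apply, Matrix.transpose_apply, Matrix.one_apply, mul_ite, mul_one,
      mul_zero] using this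
  have key : ∀ i ∈ R₁, ∀ k, k ∉ R₁ → ∑ j ∈ C₁, H i j * H k j = 0 := by
    intro i hi k hk
    have htot : ∀ i' ∈ R₁,
        (∑ j ∈ C₁, H i' j * H k j) + ∑ j ∈ C₁ᶜ, H i' j * H k j = 0 := by
      intro i' hi'
      have hik : i' ≠ k := fun h => hk (h ▸ hi')
      have h0 := horth i' k
      rw [if_neg hik] at h0
      rw [Finset.sum_add_sum_compl]
      exact h0
    have hA : ∀ i' ∈ R₁, ∑ j ∈ C₁ᶜ, H i' j * H k j = ∑ j ∈ C₁ᶜ, H i j * H k j := by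
      intro i' hi'
      refine Finset.sum_congr rfl fun j hj => ?_
      rw [h1 i' hi' i hi j (Finset.mem_compl.mp hj)]
    have hS : ∀ i' ∈ R₁, ∑ j ∈ C₁, H i' j * H k j = ∑ j ∈ C₁, H i j * H k j := by
      intro i' hi'
      have t1 := htot i' hi'
      have t2 := htot i hi
      rw [hA i' hi'] at t1
      linarith
    have hsum0 : ∑ i' ∈ R₁, ∑ j ∈ C₁, H i' j * H k j = 0 := by
      rw [Finset.sum_comm]
      refine Finset.sum_eq_zero fun j hj => ?_
      rw [← Finset.sum_mul, h2 j hj, zero_mul]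
    rw [Finset.sum_congr rfl hS, Finset.sum_const, nsmul_eq_mul] at hsum0
    have hcard : (R₁.card : ℝ) ≠ 0 := by
      exact_mod_cast Finset.card_ne_zero_of_mem hi
    exact (mul_eq_zero.mp hsum0).resolve_left hcard
  constructor
  · intro i j
    rw [hK]
    split
    · rcases hent i j with h | h <;> simp [h]
    · exact hent i j
  · ext a b
    rw [Matrix.mul_apply]
    simp only [Matrix.transpose_apply]
    have hKf : ∀ i j, K i j = if i ∈ R₁ ∧ j ∈ C₁ then -H i j else H i j := hK
    have hsmul : ((n : ℝ) • (1 : Matrix (Fin n) (Fin n) ℝ)) a b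
        = if a = b then (n : ℝ) else 0 := by
      simp [Matrix.one_apply, mul_ite]
    rw [hsmul]
    by_cases ha : a ∈ R₁ <;> by_cases hb : b ∈ R₁
    · have : ∀ j ∈ Finset.univ, K a j * K b j = H a j * H b j := by
        intro j _
        rw [hK, hK]
        by_cases hj : j ∈ C₁ <;> simp [ha, hb, hj]
      rw [Finset.sum_congr rfl this, horth]
    · -- a ∈ R₁, b ∉ R₁
      have hab : a ≠ b := fun h => hb (h ▸ ha)
      rw [if_neg hab]
      have e1 : ∑ j ∈ C₁, K a j * K b j = -∑ j ∈ C₁, H a j * H b j := by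
        rw [← Finset.sum_neg_distrib]
        refine Finset.sum_congr rfl fun j hj => ?_
        rw [hK, hK]
        simp [ha, hb, hj]
      have e2 : ∑ j ∈ C₁ᶜ, K a j * K b j = ∑ j ∈ C₁ᶜ, H a j * H b j := by
        refine Finset.sum_congr rfl fun j hj => ?_
        rw [hK, hK]
        simp [hb, Finset.mem_compl.mp hj]
      have hk0 := key a ha b hb
      have h0 := horth a b
      rw [if_neg hab, ← Finset.sum_add_sum_compl C₁] at h0
      rw [← Finset.sum_add_sum_compl C₁, e1, e2, hk0]
      linarith
    · -- b ∈ R₁, a ∉ R₁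
      have hab : a ≠ b := fun h => ha (h ▸ hb)
      rw [if_neg hab]
      have hk0' := key b hb a ha
      have hk0 : ∑ j ∈ C₁, H a j * H b j = 0 := by
        rw [← hk0']
        exact Finset.sum_congr rfl fun j _ => mul_comm _ _
      have e1 : ∑ j ∈ C₁, K a j * K b j = -∑ j ∈ C₁, H a j * H b j := by
        rw [← Finset.sum_neg_distrib]
        refine Finset.sum_congr rfl fun j hj => ?_
        rw [hK, hK]
        simp [ha, hb, hj]
      have e2 : ∑ j ∈ C₁ᶜ, K a j * K b j = ∑ j ∈ C₁ᶜ, H a j * H b j := by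
        refine Finset.sum_congr rfl fun j hj => ?_
        rw [hK, hK]
        simp [ha, Finset.mem_compl.mp hj]
      have h0 := horth a b
      rw [if_neg hab, ← Finset.sum_add_sum_compl C₁] at h0
      rw [← Finset.sum_add_sum_compl C₁, e1, e2, hk0]
      linarith
    · have : ∀ j ∈ Finset.univ, K a j * K b j = H a j * H b j := by
        intro j _
        rw [hK, hK]
        simp [ha, hb]
      rw [Finset.sum_congr rfl this, horth]
end

section
/- Let H be a real Hadamard matrix of order n, let C₁ be a set of columns of H, and let {R, R₁} be a partition of its set of rows, such that: (1) the submatrix of H with rows from R and columns from C₁ has constant rows, i.e. H_{rj} = H_{rk} for all r ∈ R and j, k ∈ C₁; and (2) every row of the submatrix of H with rows from R₁ and columns from C₁ sums to zero, i.e. Σ_{j∈C₁} H_{ij} = 0 for all i ∈ R₁. Let K be the matrix obtained from H by replacing H_{ij} with −H_{ij} for all (i,j) ∈ R₁ × C₁ and leaving all other entries unchanged. Then K is a real Hadamard matrix of order n. -/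
/-- Rank 1 switching of real Hadamard matrices (Corollary `des-had-cor`): if the submatrix
with rows outside `R₁` and columns `C₁` has constant rows, and every row of the submatrix
with rows `R₁` and columns `C₁` sums to zero, then negating the `R₁ × C₁` submatrix yields
a real Hadamard matrix. Here `R = R₁ᶜ`. -/
theorem stmt_6 (n : ℕ) (H : Matrix (Fin n) (Fin n) ℝ)
    (hent : ∀ i j, H i j = 1 ∨ H i j = -1)
    (hHad : H * H.transpose = (n : ℝ) • 1)
    (C₁ R₁ : Finset (Fin n))
    (h1 : ∀ r ∉ R₁, ∀ j ∈ C₁, ∀ k ∈ C₁, H r j = H r k)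
    (h2 : ∀ i ∈ R₁, ∑ j ∈ C₁, H i j = 0)
    (K : Matrix (Fin n) (Fin n) ℝ)
    (hK : ∀ i j, K i j = if i ∈ R₁ ∧ j ∈ C₁ then -H i j else H i j) :
    (∀ i j, K i j = 1 ∨ K i j = -1) ∧ K * K.transpose = (n : ℝ) • 1 := by
  have key : ∀ i ∈ R₁, ∀ k ∉ R₁, ∑ j ∈ C₁, H i j * H k j = 0 := by
    intro i hi k hk
    rcases C₁.eq_empty_or_nonempty with h | ⟨j₀, hj₀⟩
    · simp [h]
    · have hc : ∀ j ∈ C₁, H i j * H k j = H i j * H k j₀ := fun j hj => by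
        rw [h1 k hk j hj j₀ hj₀]
      rw [Finset.sum_congr rfl hc, ← Finset.sum_mul, h2 i hi, zero_mul]
  refine ⟨?_, ?_⟩
  · intro i j
    rw [hK]
    split
    · rcases hent i j with h | h <;> simp [h]
    · exact hent i j
  · have hKH : K * K.transpose = H * H.transpose := by
      ext i k
      simp only [Matrix.mul_apply, Matrix.transpose_apply]
      rw [← Finset.sum_add_sum_compl C₁ (fun j => K i j * K k j),
          ← Finset.sum_add_sum_compl C₁ (fun j => H i j * H k j)]
      have off : ∑ j ∈ C₁ᶜ, K i j * K k j = ∑ j ∈ C₁ᶜ, H i j * H k j := by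
        refine Finset.sum_congr rfl fun j hj => ?_
        rw [Finset.mem_compl] at hj
        rw [hK, hK]
        simp [hj]
      have onC : ∑ j ∈ C₁, K i j * K k j = ∑ j ∈ C₁, H i j * H k j := by
        by_cases hi : i ∈ R₁ <;> by_cases hk' : k ∈ R₁
        · refine Finset.sum_congr rfl fun j hj => ?_
          rw [hK, hK]; simp [hi, hk', hj]
        · have hc : ∀ j ∈ C₁, K i j * K k j = -(H i j * H k j) := fun j hj => by
            rw [hK, hK]; simp [hi, hk', hj]
          rw [Finset.sum_congr rfl hc, Finset.sum_neg_distrib, key i hi k hk', neg_zero]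
        · have hc : ∀ j ∈ C₁, K i j * K k j = -(H i j * H k j) := fun j hj => by
            rw [hK, hK]; simp [hi, hk', hj]
          have h0 : ∑ j ∈ C₁, H i j * H k j = 0 := by
            have := key k hk' i hi
            calc ∑ j ∈ C₁, H i j * H k j = ∑ j ∈ C₁, H k j * H i j := by
                  exact Finset.sum_congr rfl fun j _ => mul_comm _ _
              _ = 0 := this
          rw [Finset.sum_congr rfl hc, Finset.sum_neg_distrib, h0, neg_zero]
        · refine Finset.sum_congr rfl fun j hj => ?_
          rw [hK, hK]; simp [hi, hk']
      rw [off, onC]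
    rw [hKH, hHad]
end

section
/- Let H be a complex Hadamard matrix of order n, let R₁ be a subset of its rows, and let f be a function assigning to each column a class in {1,…,t} (giving a partition of the columns into classes C₁,…,C_t). Suppose that for any two columns j and j′ with f(j) ≠ f(j′), the restrictions of these columns to the rows of R₁ are orthogonal: Σ_{i∈R₁} H_{ij} · conj(H_{ij′}) = 0. Then for any choice of complex numbers a₁,…,a_t each of absolute value 1, the matrix K defined by K_{ij} = a_{f(j)} · H_{ij} for i ∈ R₁ and K_{ij} = H_{ij} for i ∉ R₁ is a complex Hadamard matrix of order n. -/
/-!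
With `P` the diagonal projection onto the rows in `R₁` and `A = diag (a ∘ f)`, the switched
matrix is `K = P H A + (1 - P) H`. The orthogonality hypothesis says exactly that `A` commutes
with the restricted Gram matrix `Hᴴ P H`. Since `P H Hᴴ P H = n P H`, this lets `A` be moved
past `Hᴴ P H`, which kills the cross term: `n • P H A Hᴴ (1 - P) = P H A Hᴴ P (H Hᴴ) (1 - P) = 0`.
The remaining terms of `K Kᴴ` are `n P + n (1 - P) = n • 1`, because `A` is unitary.
-/

open Matrix

namespace Matrix

variable {ι : Type*} [Fintype ι] [DecidableEq ι]

theorem commute_diagonal_comp_of_apply_eq_zero {κ R : Type*} [CommSemiring R] {f : ι → κ}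
    (d : κ → R) {G : Matrix ι ι R} (hG : ∀ k j, f k ≠ f j → G k j = 0) :
    Commute (diagonal (d ∘ f)) G := by
  ext k j
  rw [diagonal_mul, mul_diagonal]
  by_cases hkj : f k = f j
  · simp only [Function.comp_apply, hkj, mul_comm]
  · simp only [hG k j hkj, mul_zero, zero_mul]

variable {𝕜 : Type*} [Field 𝕜]

theorem mul_mul_mul_mul_one_sub_eq_zero_of_commute {H M P D : Matrix ι ι 𝕜} {c : 𝕜} (hc : c ≠ 0)
    (hHM : H * M = c • 1) (hP : P * P = P) (hD : Commute D (M * P * H)) :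
    P * H * D * M * (1 - P) = 0 := by
  have hPQ : P * (1 - P) = 0 := by rw [mul_sub, mul_one, hP, sub_self]
  have hPHMPH : P * H * M * P * H = c • (P * H) := by
    rw [mul_assoc P H M, hHM, mul_smul_comm, mul_one, smul_mul_assoc, smul_mul_assoc, hP]
  have : c • (P * H * D * M * (1 - P)) = 0 :=
    calc c • (P * H * D * M * (1 - P))
        = P * H * M * P * H * D * M * (1 - P) := by rw [hPHMPH]; simp only [smul_mul_assoc]
      _ = P * H * (D * (M * P * H)) * M * (1 - P) := by rw [hD.eq]; simp only [mul_assoc]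
      _ = P * H * D * M * P * (H * M) * (1 - P) := by simp only [mul_assoc]
      _ = c • (P * H * D * M * (P * (1 - P))) := by
          rw [hHM, mul_smul_comm, mul_one, smul_mul_assoc, mul_assoc]
      _ = 0 := by rw [hPQ, mul_zero, smul_zero]
  exact (smul_eq_zero.mp this).resolve_left hc

variable [StarRing 𝕜]

theorem switch_mul_conjTranspose_eq_smul_one {H P A : Matrix ι ι 𝕜} {c : 𝕜} (hc : c ≠ 0)
    (hH : H * Hᴴ = c • 1) (hP : P * P = P) (hPself : Pᴴ = P) (hA : A * Aᴴ = 1)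
    (hAcomm : Commute A (Hᴴ * P * H)) :
    (P * H * A + (1 - P) * H) * (P * H * A + (1 - P) * H)ᴴ = c • 1 := by
  have cross : P * H * A * Hᴴ * (1 - P) = 0 :=
    mul_mul_mul_mul_one_sub_eq_zero_of_commute hc hH hP hAcomm
  have cross' : (1 - P) * H * Aᴴ * Hᴴ * P = 0 := by
    simpa [conjTranspose_mul, hPself, mul_assoc] using congrArg conjTranspose cross
  have hQ : (1 - P) * (1 - P) = 1 - P := by
    rw [mul_sub, mul_one, sub_mul, one_mul, hP, sub_self, sub_zero]
  calc (P * H * A + (1 - P) * H) * (P * H * A + (1 - P) * H)ᴴ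
      = P * (H * (A * Aᴴ) * Hᴴ) * P + P * H * A * Hᴴ * (1 - P)
          + (1 - P) * H * Aᴴ * Hᴴ * P + (1 - P) * (H * Hᴴ) * (1 - P) := by
        simp only [conjTranspose_add, conjTranspose_mul, conjTranspose_sub, conjTranspose_one,
          hPself]
        noncomm_ring
    _ = c • (P * P + (1 - P) * (1 - P)) := by
        rw [hA, mul_one, hH, cross, cross']
        simp only [mul_smul_comm, smul_mul_assoc, mul_one, add_zero, smul_add]
    _ = c • 1 := by rw [hP, hQ, add_sub_cancel]

end Matrix

/-- Conditions for rank 1 switchings of complex Hadamard matrices: if columns from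
distinct classes of the partition `C₁,…,C_t` (given by `f`) restrict to orthogonal vectors
on the rows of `R₁`, then multiplying, within the rows of `R₁`, each column class `C_l` by
a unimodular constant `a l` yields a complex Hadamard matrix. -/
theorem stmt_7 (n t : ℕ) (H : Matrix (Fin n) (Fin n) ℂ)
    (hent : ∀ i j, ‖H i j‖ = 1)
    (hHad : H * H.conjTranspose = (n : ℂ) • 1)
    (R₁ : Finset (Fin n)) (f : Fin n → Fin t)
    (horth : ∀ j j' : Fin n, f j ≠ f j' →
      ∑ i ∈ R₁, H i j * (starRingEnd ℂ) (H i j') = 0)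
    (a : Fin t → ℂ) (ha : ∀ l, ‖a l‖ = 1)
    (K : Matrix (Fin n) (Fin n) ℂ)
    (hK : ∀ i j, K i j = if i ∈ R₁ then a (f j) * H i j else H i j) :
    (∀ i j, ‖K i j‖ = 1) ∧ K * K.conjTranspose = (n : ℂ) • 1 := by
  refine ⟨fun i j => by rw [hK]; split_ifs <;> simp [ha, hent], ?_⟩
  rcases Nat.eq_zero_or_pos n with rfl | hn
  · exact Subsingleton.elim _ _
  set P : Matrix (Fin n) (Fin n) ℂ := diagonal fun i => if i ∈ R₁ then 1 else 0
  set A : Matrix (Fin n) (Fin n) ℂ := diagonal (a ∘ f)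
  have hKPA : K = P * H * A + (1 - P) * H := by
    ext i j
    by_cases hi : i ∈ R₁ <;> simp [hK, hi, P, A, sub_mul, diagonal_mul, mul_diagonal, mul_comm]
  have hP : P * P = P := by simp [P, diagonal_mul_diagonal]
  have hPself : Pᴴ = P := by simp [P, diagonal_conjTranspose]
  have hA : A * Aᴴ = 1 := by
    simp [A, diagonal_conjTranspose, diagonal_mul_diagonal, Complex.mul_conj', ha]
  have hAcomm : Commute A (Hᴴ * P * H) := by
    refine commute_diagonal_comp_of_apply_eq_zero a fun k j hkj => ?_
    rw [mul_apply]
    simp only [P, mul_diagonal, conjTranspose_apply, RCLike.star_def, mul_ite, mul_one, mul_zero,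
      ite_mul, zero_mul, Finset.sum_ite_mem, Finset.univ_inter]
    simpa only [mul_comm] using horth j k (Ne.symm hkj)
  rw [hKPA]
  exact switch_mul_conjTranspose_eq_smul_one (by exact_mod_cast hn.ne') hHad hP hPself hA hAcomm
end

section
/- Let H_m and H_n be complex Hadamard matrices of orders m and n respectively, and let H = H_m ⊗ H_n be their Kronecker product, the complex Hadamard matrix of order mn with entries H((i₁,i₂),(j₁,j₂)) = H_m(i₁,j₁) · H_n(i₂,j₂), where rows and columns are indexed by pairs (i₁,i₂) and (j₁,j₂) with i₁, j₁ ∈ {0,…,m−1} and i₂, j₂ ∈ {0,…,n−1}. Then for any complex numbers a₀,…,a_{n−1} each of absolute value 1, the matrix K defined by K((i₁,i₂),(j₁,j₂)) = a_{j₂} · H_m(i₁,j₁) · H_n(i₂,j₂) when i₁ = 0 and K((i₁,i₂),(j₁,j₂)) = H_m(i₁,j₁) · H_n(i₂,j₂) when i₁ ≠ 0 is a complex Hadamard matrix of order mn. -/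
/-!
Write `K(i₁, i₂)(j₁, j₂) = H_m(i₁, j₁) · B_{i₁}(i₂, j₂)`, where the `n × n` block `B_i` may
depend on the row block `i`: here `B_0 = H_n · diag(a)` and `B_i = H_n` otherwise. The inner
product of two rows of `K` factors as `(H_m H_mᴴ)(i₁, k₁) · (B_{i₁} B_{k₁}ᴴ)(i₂, k₂)`. The first
factor kills the terms with `i₁ ≠ k₁`, so only the products `B_i B_iᴴ` matter, and these all
equal `n · 1` because `diag(a)` is unitary.
-/

namespace Matrix

variable {l n α : Type*}

def twistedKronecker [Mul α] (A : Matrix l l α) (B : l → Matrix n n α) :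
    Matrix (l × n) (l × n) α :=
  of fun p q => A p.1 q.1 * B p.1 p.2 q.2

theorem twistedKronecker_mul_conjTranspose_apply [Fintype l] [Fintype n] [CommSemiring α]
    [StarRing α] (A : Matrix l l α) (B : l → Matrix n n α) (i₁ k₁ : l) (i₂ k₂ : n) :
    (twistedKronecker A B * (twistedKronecker A B)ᴴ) (i₁, i₂) (k₁, k₂) =
      (A * Aᴴ) i₁ k₁ * (B i₁ * (B k₁)ᴴ) i₂ k₂ := by
  simp only [mul_apply, conjTranspose_apply, twistedKronecker, of_apply, Fintype.sum_prod_type,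
    Finset.sum_mul_sum, star_mul']
  refine Finset.sum_congr rfl fun _ _ => Finset.sum_congr rfl fun _ _ => ?_
  ring

theorem twistedKronecker_mul_conjTranspose [Fintype l] [Fintype n] [CommSemiring α]
    [StarRing α] [DecidableEq l] [DecidableEq n] {A : Matrix l l α} {B : l → Matrix n n α} {r s : α}
    (hA : A * Aᴴ = r • 1) (hB : ∀ i, B i * (B i)ᴴ = s • 1) :
    twistedKronecker A B * (twistedKronecker A B)ᴴ = (r * s) • 1 := by
  ext ⟨i₁, i₂⟩ ⟨k₁, k₂⟩
  rw [twistedKronecker_mul_conjTranspose_apply, hA]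
  by_cases h : i₁ = k₁
  · subst h
    simp [hB, one_apply]
  · simp [h]

theorem mul_diagonal_mul_conjTranspose_mul_diagonal [Fintype n] [Semiring α] [StarRing α]
    [DecidableEq n] (H : Matrix n n α) {a : n → α} (ha : ∀ j, a j * star (a j) = 1) :
    H * diagonal a * (H * diagonal a)ᴴ = H * Hᴴ := by
  have hunitary : diagonal a * (diagonal a)ᴴ = 1 := by
    rw [diagonal_conjTranspose, diagonal_mul_diagonal, ← diagonal_one]
    exact congrArg diagonal (funext ha)
  rw [conjTranspose_mul, Matrix.mul_assoc, ← Matrix.mul_assoc (diagonal a), hunitary,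
    Matrix.one_mul]

end Matrix

/-- Rank 1 switchings of Kronecker products: if `H = H_m ⊗ H_n` is a Kronecker product of
complex Hadamard matrices, then multiplying, within the first `n` rows (those with
`i₁ = 0`), the `j₂`-th column of each block by a unimodular constant `a j₂` yields a
complex Hadamard matrix of order `mn`. -/
theorem stmt_8 (m n : ℕ) (hm : 0 < m)
    (Hm : Matrix (Fin m) (Fin m) ℂ) (Hn : Matrix (Fin n) (Fin n) ℂ)
    (hmEnt : ∀ i j, ‖Hm i j‖ = 1)
    (hmHad : Hm * Hm.conjTranspose = (m : ℂ) • 1)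
    (hnEnt : ∀ i j, ‖Hn i j‖ = 1)
    (hnHad : Hn * Hn.conjTranspose = (n : ℂ) • 1)
    (a : Fin n → ℂ) (ha : ∀ j, ‖a j‖ = 1)
    (K : Matrix (Fin m × Fin n) (Fin m × Fin n) ℂ)
    (hK : ∀ (i₁ j₁ : Fin m) (i₂ j₂ : Fin n), K (i₁, i₂) (j₁, j₂) =
      if i₁ = (⟨0, hm⟩ : Fin m) then a j₂ * (Hm i₁ j₁ * Hn i₂ j₂)
      else Hm i₁ j₁ * Hn i₂ j₂) :
    (∀ p q, ‖K p q‖ = 1) ∧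
      K * K.conjTranspose = ((m * n : ℕ) : ℂ) • 1 := by
  set B : Fin m → Matrix (Fin n) (Fin n) ℂ := fun i =>
    if i = ⟨0, hm⟩ then Hn * Matrix.diagonal a else Hn
  have hKB : K = Matrix.twistedKronecker Hm B := by
    ext ⟨i₁, i₂⟩ ⟨j₁, j₂⟩
    rw [hK]
    split_ifs with h
    · simp only [Matrix.twistedKronecker, B, h, Matrix.of_apply, if_true, Matrix.mul_diagonal]
      ring
    · simp [Matrix.twistedKronecker, B, h]
  have ha_mul_star : ∀ j, a j * star (a j) = 1 := fun j => by
    rw [Complex.star_def, Complex.mul_conj', ha, Complex.ofReal_one, one_pow]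
  have hB : ∀ i, B i * (B i).conjTranspose = (n : ℂ) • 1 := fun i => by
    by_cases h : i = ⟨0, hm⟩
    · simp only [B, if_pos h, Matrix.mul_diagonal_mul_conjTranspose_mul_diagonal Hn ha_mul_star,
        hnHad]
    · simp only [B, if_neg h, hnHad]
  refine ⟨fun ⟨i₁, i₂⟩ ⟨j₁, j₂⟩ => ?_, ?_⟩
  · rw [hK]
    split_ifs <;> simp [hmEnt, hnEnt, ha]
  · rw [hKB, Matrix.twistedKronecker_mul_conjTranspose hmHad hB, Nat.cast_mul]
end

section
/- Let H be a complex Hadamard matrix of order n, let {R, R₁, R₂} be a partition of its set of rows and {C, C₁, C₂} a partition of its set of columns, and let s ∈ ℂ be such that: (1) every column of the submatrix with rows R and columns C sums to s, i.e. Σ_{i∈R} H_{ij} = s for all j ∈ C; (2) every column of the submatrix with rows R₁ and columns C₁ sums to −conj(s), i.e. Σ_{i∈R₁} H_{ij} = −conj(s) for all j ∈ C₁; (3) H_{ij} = 1 for all (i,j) ∈ R × C₁ and all (i,j) ∈ R₁ × C; (4) for every j ∈ C₂, both Σ_{i∈R} H_{ij} = 0 and Σ_{i∈R₁} H_{ij}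 = 0. Then for any z ∈ ℂ with |z| = 1, the matrix K obtained from H by multiplying every entry with (i,j) ∈ R₁ × C₂ by z and every entry with (i,j) ∈ R₂ × C₁ by conj(z), leaving all other entries unchanged, is a complex Hadamard matrix of order n. -/
/-!
Column `j` of `K` is column `j` of `H` with its `R₁`-block multiplied by `z` if `j ∈ C₂` and its
`R₂`-block multiplied by `conj z` if `j ∈ C₁`. So the inner product of two columns of `K` is
`σ + a σ₁ + b σ₂`, where `σ, σ₁, σ₂` are the inner products of the `R`-, `R₁`- and `R₂`-blocks of
the corresponding columns of `H` and `a, b` depend only on the classes of the two columns. For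
columns of the same class `a = b = 1`. For columns of different classes, conditions (1)–(4) and
the orthogonality of the columns of `H` make the block with a changed coefficient vanish; for `C₁`
against `C₂` both `σ₁` and `σ₂` change, by the same factor, and `σ = 0`. Hence `Kᴴ K = Hᴴ H = n I`,
and a square matrix with `Kᴴ K = n I` also has `K Kᴴ = n I`.
-/

open Finset Matrix

theorem Matrix.mul_eq_card_smul_one_comm {m K : Type*} [Fintype m] [DecidableEq m] [Field K]
    [CharZero K] {A B : Matrix m m K} (h : A * B = (Fintype.card m : K) • 1) :
    B * A = (Fintype.card m : K) • 1 := by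
  cases isEmpty_or_nonempty m
  · exact Subsingleton.elim _ _
  set c : K := (Fintype.card m : K)
  have hc : c ≠ 0 := by simp [c]
  have hinv : A * (c⁻¹ • B) = 1 := by
    rw [Matrix.mul_smul, h, smul_smul, inv_mul_cancel₀ hc, one_smul]
  calc B * A = c • ((c⁻¹ • B) * A) := by
        rw [Matrix.smul_mul, smul_smul, mul_inv_cancel₀ hc, one_smul]
    _ = c • 1 := by rw [mul_eq_one_comm.mp hinv]

theorem Finset.mem_partition_three {κ : Type*} [Fintype κ] [DecidableEq κ] {C C₁ C₂ : Finset κ}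
    (hcover : C ∪ C₁ ∪ C₂ = univ) (h01 : Disjoint C C₁) (h02 : Disjoint C C₂)
    (h12 : Disjoint C₁ C₂) (j : κ) :
    j ∈ C ∧ j ∉ C₁ ∧ j ∉ C₂ ∨ j ∉ C ∧ j ∈ C₁ ∧ j ∉ C₂ ∨ j ∉ C ∧ j ∉ C₁ ∧ j ∈ C₂ := by
  have hj : j ∈ C ∪ C₁ ∪ C₂ := hcover ▸ mem_univ j
  rcases mem_union.1 hj with hj | hj
  · rcases mem_union.1 hj with hj | hj
    · exact Or.inl ⟨hj, disjoint_left.1 h01 hj, disjoint_left.1 h02 hj⟩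
    · exact Or.inr (Or.inl ⟨disjoint_right.1 h01 hj, hj, disjoint_left.1 h12 hj⟩)
  · exact Or.inr (Or.inr ⟨disjoint_right.1 h02 hj, disjoint_right.1 h12 hj, hj⟩)

section BlockGram

variable {α ι κ : Type*} [CommRing α] [StarRing α]

def blockGram (S : Finset ι) (H : Matrix ι κ α) (j j' : κ) : α :=
  ∑ i ∈ S, star (H i j) * H i j'

theorem blockGram_swap (S : Finset ι) (H : Matrix ι κ α) (j j' : κ) :
    blockGram S H j' j = star (blockGram S H j j') := by
  simp only [blockGram, star_sum, star_mul', star_star, mul_comm]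

theorem blockGram_union [DecidableEq ι] {S T : Finset ι} (h : Disjoint S T) (H : Matrix ι κ α)
    (j j' : κ) : blockGram (S ∪ T) H j j' = blockGram S H j j' + blockGram T H j j' :=
  sum_union h

theorem conjTranspose_mul_self_apply_eq_blockGram [Fintype ι] [DecidableEq ι]
    {R R₁ R₂ : Finset ι} (hcover : R ∪ R₁ ∪ R₂ = univ) (h01 : Disjoint R R₁) (h02 : Disjoint R R₂)
    (h12 : Disjoint R₁ R₂) (H : Matrix ι κ α) (j j' : κ) :
    (Hᴴ * H) j j' = blockGram R H j j' + blockGram R₁ H j j' + blockGram R₂ H j j' := by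
  rw [← blockGram_union h01, ← blockGram_union (disjoint_union_left.2 ⟨h02, h12⟩), hcover]
  rfl

theorem blockGram_of_eq_mul {S : Finset ι} {H K : Matrix ι κ α} (w : κ → α)
    (hK : ∀ i ∈ S, ∀ j, K i j = w j * H i j) (j j' : κ) :
    blockGram S K j j' = star (w j) * w j' * blockGram S H j j' := by
  rw [blockGram, blockGram, mul_sum]
  refine sum_congr rfl fun i hi => ?_
  rw [hK i hi, hK i hi, star_mul']
  ring

theorem blockGram_of_left_eq_one {S : Finset ι} {H : Matrix ι κ α} {j : κ}
    (h : ∀ i ∈ S, H i j = 1) (j' : κ) : blockGram S H j j' = ∑ i ∈ S, H i j' :=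
  sum_congr rfl fun i hi => by rw [h i hi, star_one, one_mul]

theorem blockGram_of_right_eq_one {S : Finset ι} {H : Matrix ι κ α} {j' : κ}
    (h : ∀ i ∈ S, H i j' = 1) (j : κ) : blockGram S H j j' = star (∑ i ∈ S, H i j) := by
  rw [star_sum]
  exact sum_congr rfl fun i hi => by rw [h i hi, mul_one]

theorem blockGram_eq_zero_comm {S : Finset ι} {H : Matrix ι κ α} {j j' : κ} :
    blockGram S H j' j = 0 ↔ blockGram S H j j' = 0 := by
  rw [blockGram_swap, star_eq_zero]

end BlockGram

section Switching

variable {α ι κ : Type*} [CommRing α] [StarRing α] [Fintype ι] [DecidableEq ι] [DecidableEq κ]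
  {R R₁ R₂ : Finset ι} {C C₁ C₂ : Finset κ} {H K : Matrix ι κ α} {s z : α}

theorem conjTranspose_mul_self_apply_of_switch (hRcover : R ∪ R₁ ∪ R₂ = univ)
    (hR01 : Disjoint R R₁) (hR02 : Disjoint R R₂) (hR12 : Disjoint R₁ R₂)
    (hK : ∀ i j, K i j =
      if i ∈ R₁ ∧ j ∈ C₂ then z * H i j else if i ∈ R₂ ∧ j ∈ C₁ then star z * H i j else H i j)
    (j j' : κ) :
    (Kᴴ * K) j j' = blockGram R H j j'
      + star (if j ∈ C₂ then z else 1) * (if j' ∈ C₂ then z else 1) * blockGram R₁ H j j'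
      + star (if j ∈ C₁ then star z else 1) * (if j' ∈ C₁ then star z else 1)
        * blockGram R₂ H j j' := by
  have hKR : ∀ i ∈ R, ∀ j, K i j = 1 * H i j := fun i hi j => by
    rw [hK, if_neg fun h => disjoint_left.1 hR01 hi h.1,
      if_neg fun h => disjoint_left.1 hR02 hi h.1, one_mul]
  have hKR₁ : ∀ i ∈ R₁, ∀ j, K i j = (if j ∈ C₂ then z else 1) * H i j := fun i hi j => by
    rw [hK]
    by_cases hj : j ∈ C₂ <;> simp [hi, hj, disjoint_left.1 hR12 hi]
  have hKR₂ : ∀ i ∈ R₂, ∀ j, K i j = (if j ∈ C₁ then star z else 1) * H i j := fun i hi j => by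
    rw [hK]
    by_cases hj : j ∈ C₁ <;> simp [hi, hj, disjoint_right.1 hR12 hi]
  rw [conjTranspose_mul_self_apply_eq_blockGram hRcover hR01 hR02 hR12, blockGram_of_eq_mul _ hKR,
    blockGram_of_eq_mul _ hKR₁, blockGram_of_eq_mul _ hKR₂, star_one, one_mul, one_mul]

theorem conjTranspose_mul_self_of_switch [Fintype κ] (hRcover : R ∪ R₁ ∪ R₂ = univ)
    (hR01 : Disjoint R R₁) (hR02 : Disjoint R R₂) (hR12 : Disjoint R₁ R₂)
    (hCcover : C ∪ C₁ ∪ C₂ = univ)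
    (hC01 : Disjoint C C₁) (hC02 : Disjoint C C₂) (hC12 : Disjoint C₁ C₂)
    (hH : (Hᴴ * H).IsDiag)
    (h1 : ∀ j ∈ C, ∑ i ∈ R, H i j = s) (h2 : ∀ j ∈ C₁, ∑ i ∈ R₁, H i j = -star s)
    (h3 : ∀ i ∈ R, ∀ j ∈ C₁, H i j = 1) (h3' : ∀ i ∈ R₁, ∀ j ∈ C, H i j = 1)
    (h4 : ∀ j ∈ C₂, ∑ i ∈ R, H i j = 0 ∧ ∑ i ∈ R₁, H i j = 0)
    (hz : star z * z = 1)
    (hK : ∀ i j, K i j =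
      if i ∈ R₁ ∧ j ∈ C₂ then z * H i j else if i ∈ R₂ ∧ j ∈ C₁ then star z * H i j else H i j) :
    Kᴴ * K = Hᴴ * H := by
  have hsplit := conjTranspose_mul_self_apply_eq_blockGram hRcover hR01 hR02 hR12 H
  have hsum : ∀ j j', j ≠ j' →
      blockGram R H j j' + blockGram R₁ H j j' + blockGram R₂ H j j' = 0 :=
    fun j j' hjj' => by rw [← hsplit, hH hjj']
  have hG₂ : ∀ j ∈ C, ∀ j' ∈ C₁, blockGram R₂ H j j' = 0 := fun j hj j' hj' => by
    have := hsum j j' (disjoint_iff_ne.1 hC01 j hj j' hj')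
    rw [blockGram_of_right_eq_one (h3 · · j' hj'), h1 j hj,
      blockGram_of_left_eq_one (h3' · · j hj), h2 j' hj'] at this
    linear_combination this
  have hG₁ : ∀ j ∈ C, ∀ j' ∈ C₂, blockGram R₁ H j j' = 0 := fun j hj j' hj' =>
    (blockGram_of_left_eq_one (h3' · · j hj) j').trans (h4 j' hj').2
  have hG : ∀ j ∈ C₁, ∀ j' ∈ C₂, blockGram R H j j' = 0 := fun j hj j' hj' =>
    (blockGram_of_left_eq_one (h3 · · j hj) j').trans (h4 j' hj').1
  ext j j'
  rw [conjTranspose_mul_self_apply_of_switch hRcover hR01 hR02 hR12 hK, hsplit]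
  rcases mem_partition_three hCcover hC01 hC02 hC12 j with
    ⟨hj₀, hj₁, hj₂⟩ | ⟨hj₀, hj₁, hj₂⟩ | ⟨hj₀, hj₁, hj₂⟩ <;>
  rcases mem_partition_three hCcover hC01 hC02 hC12 j' with
    ⟨hj'₀, hj'₁, hj'₂⟩ | ⟨hj'₀, hj'₁, hj'₂⟩ | ⟨hj'₀, hj'₁, hj'₂⟩ <;>
  simp only [hj₁, hj₂, hj'₁, hj'₂, if_true, if_false, star_one, star_star, one_mul, mul_one]
  · linear_combination (star z - 1) * hG₂ j hj₀ j' hj'₁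
  · linear_combination (z - 1) * hG₁ j hj₀ j' hj'₂
  · linear_combination (z - 1) * blockGram_eq_zero_comm.2 (hG₂ j' hj'₀ j hj₁)
  · linear_combination blockGram R₂ H j j' * hz
  · linear_combination
      (z - 1) * (hsum j j' (disjoint_iff_ne.1 hC12 j hj₁ j' hj'₂) - hG j hj₁ j' hj'₂)
  · linear_combination (star z - 1) * blockGram_eq_zero_comm.2 (hG₁ j' hj'₀ j hj₂)
  · linear_combination (star z - 1) * (hsum j j' (disjoint_iff_ne.1 hC12 j' hj'₁ j hj₂).symm
      - blockGram_eq_zero_comm.2 (hG j' hj'₁ j hj₂))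
  · linear_combination blockGram R₁ H j j' * hz

end Switching

/-- Conditions for rank 2 switchings of complex Hadamard matrices: under conditions
(1)-(4) on the partitions `{R, R₁, R₂}` of rows and `{C, C₁, C₂}` of columns, multiplying
the `R₁ × C₂` submatrix by a unimodular `z` and the `R₂ × C₁` submatrix by `conj z`
yields a complex Hadamard matrix. -/
theorem stmt_9 (n : ℕ) (H : Matrix (Fin n) (Fin n) ℂ)
    (hent : ∀ i j, ‖H i j‖ = 1)
    (hHad : H * H.conjTranspose = (n : ℂ) • 1)
    (R R₁ R₂ C C₁ C₂ : Finset (Fin n))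
    (hRcover : R ∪ R₁ ∪ R₂ = Finset.univ)
    (hR01 : Disjoint R R₁) (hR02 : Disjoint R R₂) (hR12 : Disjoint R₁ R₂)
    (hCcover : C ∪ C₁ ∪ C₂ = Finset.univ)
    (hC01 : Disjoint C C₁) (hC02 : Disjoint C C₂) (hC12 : Disjoint C₁ C₂)
    (s : ℂ)
    (h1 : ∀ j ∈ C, ∑ i ∈ R, H i j = s)
    (h2 : ∀ j ∈ C₁, ∑ i ∈ R₁, H i j = -(starRingEnd ℂ) s)
    (h3 : (∀ i ∈ R, ∀ j ∈ C₁, H i j = 1) ∧ (∀ i ∈ R₁, ∀ j ∈ C, H i j = 1))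
    (h4 : ∀ j ∈ C₂, ∑ i ∈ R, H i j = 0 ∧ ∑ i ∈ R₁, H i j = 0)
    (z : ℂ) (hz : ‖z‖ = 1)
    (K : Matrix (Fin n) (Fin n) ℂ)
    (hK : ∀ i j, K i j =
      if i ∈ R₁ ∧ j ∈ C₂ then z * H i j
      else if i ∈ R₂ ∧ j ∈ C₁ then (starRingEnd ℂ) z * H i j
      else H i j) :
    (∀ i j, ‖K i j‖ = 1) ∧ K * K.conjTranspose = (n : ℂ) • 1 := by
  simp only [starRingEnd_apply] at h2 hK
  refine ⟨fun i j => ?_, ?_⟩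
  · rw [hK]
    split_ifs <;> simp [hent, hz]
  have hunit : star z * z = 1 := by
    rw [← starRingEnd_apply, Complex.conj_mul', hz]
    norm_num
  have hcol : Hᴴ * H = (n : ℂ) • 1 := by
    simpa using mul_eq_card_smul_one_comm (m := Fin n) (by simpa using hHad)
  have hdiag : (Hᴴ * H).IsDiag := hcol ▸ isDiag_smul_one _ _
  have hKcol := conjTranspose_mul_self_of_switch hRcover hR01 hR02 hR12 hCcover hC01 hC02 hC12
    hdiag h1 h2 h3.1 h3.2 h4 hunit hK
  simpa using mul_eq_card_smul_one_comm (m := Fin n) (by simpa using hKcol.trans hcol)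
end

section
/- Let H be a complex Hadamard matrix of order n, let {R, R₁, R₂} be a partition of its set of rows and {C, C₁, C₂} a partition of its set of columns with R and R₁ nonempty, and let s ∈ ℂ be such that: (1) Σ_{i∈R} H_{ij} = s for all j ∈ C; (2) Σ_{i∈R₁} H_{ij} = −conj(s) for all j ∈ C₁; (3) H_{ij} = 1 for all (i,j) ∈ R × C₁ and all (i,j) ∈ R₁ × C; (4) Σ_{i∈R} H_{ij} = 0 and Σ_{i∈R₁} H_{ij} = 0 for all j ∈ C₂. Then there exists r ∈ ℂ with |R|·r = |C|·s such that: (i) every row of the submatrix with rows R and columns C sums to r, i.e. Σ_{j∈C} H_{ij} = r for all i ∈ R; (ii) every row of the submatrix with rows R₁ and columns C₁ sums to −conj(r), i.e. Σ_{j∈C₁} H_{ij} = −conj(r) for all i ∈ R₁; and (iii) for every i ∈ R₂, both Σ_{j∈C} H_{ij} = 0 and Σ_{j∈C₁} H_{ij} = 0. -/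
/-!
Pair row `i` of `H` with the sums of the rows in `R` and in `R₁`. Since these column sums are
constant on `C` and on `C₁` and vanish on `C₂`, orthogonality of the rows gives, with
`u = ∑_{j ∈ C} H i j` and `v = ∑_{j ∈ C₁} H i j`, the linear system
`conj s · u + |R| · v = n [i ∈ R]`, `|R₁| · u - s · v = n [i ∈ R₁]`.
Its determinant `-(|s|² + |R| |R₁|)` is a nonzero real number, so `u` and `v` are determined by
which of `R`, `R₁`, `R₂` contains `i`; the value of `u` on `R` is `r = n s / (|s|² + |R| |R₁|)`.
-/

open Finset ComplexConjugate

namespace Matrix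

variable {m n α : Type*} [Fintype n] [DecidableEq m] [CommSemiring α] [StarRing α]

theorem sum_mul_star_sum_rows_of_mul_conjTranspose_eq_smul_one {H : Matrix m n α} {a : α}
    (hH : H * Hᴴ = a • 1) (S : Finset m) (i : m) :
    ∑ j, H i j * star (∑ k ∈ S, H k j) = if i ∈ S then a else 0 := by
  have horth : ∀ k, ∑ j, H i j * star (H k j) = if i = k then a else 0 := fun k => by
    simpa [mul_apply, one_apply] using congrFun (congrFun hH i) k
  simp_rw [star_sum, mul_sum]
  rw [sum_comm]
  simp_rw [horth]
  exact sum_ite_eq S i fun _ => a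

theorem star_mul_sum_add_star_mul_sum_of_colSum_const [DecidableEq n] {H : Matrix m n α}
    {a : α} (hH : H * Hᴴ = a • 1) {C C₁ C₂ : Finset n} (hcover : C ∪ C₁ ∪ C₂ = univ)
    (hC01 : Disjoint C C₁) (hC02 : Disjoint C C₂) (hC12 : Disjoint C₁ C₂)
    {S : Finset m} {σ τ : α} (hC : ∀ j ∈ C, ∑ k ∈ S, H k j = σ)
    (hC₁ : ∀ j ∈ C₁, ∑ k ∈ S, H k j = τ) (hC₂ : ∀ j ∈ C₂, ∑ k ∈ S, H k j = 0) (i : m) :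
    star σ * ∑ j ∈ C, H i j + star τ * ∑ j ∈ C₁, H i j = if i ∈ S then a else 0 := by
  rw [← sum_mul_star_sum_rows_of_mul_conjTranspose_eq_smul_one hH S i, ← hcover,
    sum_union (disjoint_union_left.mpr ⟨hC02, hC12⟩), sum_union hC01,
    sum_eq_zero (s := C₂) fun j hj => by rw [hC₂ j hj, star_zero, mul_zero], add_zero,
    mul_sum, mul_sum]
  congr 1 <;> refine sum_congr rfl fun j hj => ?_
  · rw [hC j hj, mul_comm]
  · rw [hC₁ j hj, mul_comm]

end Matrix

theorem Complex.mul_eq_of_conj_linear_system {s u v a b : ℂ} {p q : ℕ}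
    (e₁ : conj s * u + p * v = a) (e₂ : q * u - s * v = b) :
    ((normSq s + (p * q : ℕ) : ℝ) : ℂ) * u = s * a + p * b ∧
      ((normSq s + (p * q : ℕ) : ℝ) : ℂ) * v = q * a - conj s * b := by
  push_cast
  rw [normSq_eq_conj_mul_self]
  exact ⟨by linear_combination s * e₁ + p * e₂, by linear_combination q * e₁ - conj s * e₂⟩

theorem card_mul_eq_card_mul_of_sum_eq {ι κ α : Type*} [CommSemiring α] {f : ι → κ → α}
    {R : Finset ι} {C : Finset κ} {r s : α} (hrow : ∀ i ∈ R, ∑ j ∈ C, f i j = r)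
    (hcol : ∀ j ∈ C, ∑ i ∈ R, f i j = s) : (#R : α) * r = #C * s := by
  rw [← nsmul_eq_mul, ← nsmul_eq_mul, ← sum_const, ← sum_const, ← sum_congr rfl hrow,
    ← sum_congr rfl hcol, sum_comm]

theorem stmt_10_general (n : ℕ) (H : Matrix (Fin n) (Fin n) ℂ)
    (hHad : H * H.conjTranspose = (n : ℂ) • 1)
    (R R₁ R₂ C C₁ C₂ : Finset (Fin n))
    (hRne : R.Nonempty) (hR1ne : R₁.Nonempty)
    (hR01 : Disjoint R R₁) (hR02 : Disjoint R R₂) (hR12 : Disjoint R₁ R₂)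
    (hCcover : C ∪ C₁ ∪ C₂ = Finset.univ)
    (hC01 : Disjoint C C₁) (hC02 : Disjoint C C₂) (hC12 : Disjoint C₁ C₂)
    (s : ℂ)
    (h1 : ∀ j ∈ C, ∑ i ∈ R, H i j = s)
    (h2 : ∀ j ∈ C₁, ∑ i ∈ R₁, H i j = -(starRingEnd ℂ) s)
    (h3 : (∀ i ∈ R, ∀ j ∈ C₁, H i j = 1) ∧ (∀ i ∈ R₁, ∀ j ∈ C, H i j = 1))
    (h4 : ∀ j ∈ C₂, ∑ i ∈ R, H i j = 0 ∧ ∑ i ∈ R₁, H i j = 0) :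
    ∃ r : ℂ, (R.card : ℂ) * r = (C.card : ℂ) * s ∧
      (∀ i ∈ R, ∑ j ∈ C, H i j = r) ∧
      (∀ i ∈ R₁, ∑ j ∈ C₁, H i j = -(starRingEnd ℂ) r) ∧
      (∀ i ∈ R₂, ∑ j ∈ C, H i j = 0 ∧ ∑ j ∈ C₁, H i j = 0) := by
  have hones {S T : Finset (Fin n)} (h : ∀ i ∈ S, ∀ j ∈ T, H i j = 1) (j) (hj : j ∈ T) :
      ∑ i ∈ S, H i j = #S := by
    simp [sum_congr rfl fun i hi => h i hi j hj]
  have eqR := H.star_mul_sum_add_star_mul_sum_of_colSum_const hHad hCcover hC01 hC02 hC12 h1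
    (hones h3.1) fun j hj => (h4 j hj).1
  have eqR₁ := H.star_mul_sum_add_star_mul_sum_of_colSum_const hHad hCcover hC01 hC02 hC12
    (hones h3.2) h2 fun j hj => (h4 j hj).2
  have sol i := Complex.mul_eq_of_conj_linear_system (by simpa using eqR i)
    (by simpa [sub_eq_add_neg] using eqR₁ i)
  set D : ℝ := Complex.normSq s + (#R * #R₁ : ℕ)
  have hD : (D : ℂ) ≠ 0 := Complex.ofReal_ne_zero.mpr <|
    (add_pos_of_nonneg_of_pos (Complex.normSq_nonneg s)
      (Nat.cast_pos.mpr (Nat.mul_pos hRne.card_pos hR1ne.card_pos))).ne'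
  have hrow : ∀ i ∈ R, ∑ j ∈ C, H i j = n * s / D := fun i hi => by
    rw [eq_div_iff hD, mul_comm]
    simpa only [if_pos hi, if_neg (disjoint_left.mp hR01 hi), mul_zero, add_zero, mul_comm]
      using (sol i).1
  refine ⟨n * s / D, card_mul_eq_card_mul_of_sum_eq hrow h1, hrow, fun i hi => ?_, fun i hi => ?_⟩
  · rw [map_div₀, map_mul, Complex.conj_ofReal, map_natCast, neg_div', eq_div_iff hD, mul_comm]
    simpa only [if_pos hi, if_neg (disjoint_right.mp hR01 hi), mul_zero, zero_sub, mul_comm,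
      neg_mul] using (sol i).2
  · have hiR := disjoint_right.mp hR02 hi
    have hiR₁ := disjoint_right.mp hR12 hi
    simpa only [if_neg hiR, if_neg hiR₁, mul_zero, add_zero, sub_zero, mul_eq_zero, hD,
      false_or] using sol i

/-- Equivalent row conditions for rank 2 switchings (Corollary `col-row`): if a complex
Hadamard matrix satisfies the column conditions (1)-(4) for partitions `{R, R₁, R₂}` and
`{C, C₁, C₂}`, then there is `r ∈ ℂ` with `|R|·r = |C|·s` such that the corresponding row
conditions hold: every row sum of the `R × C` submatrix equals `r`, every row sum of the
`R₁ × C₁` submatrix equals `-conj r`, and every row from `R₂` sums to zero over both `C`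
and `C₁`. -/
theorem stmt_10 (n : ℕ) (H : Matrix (Fin n) (Fin n) ℂ)
    (hent : ∀ i j, ‖H i j‖ = 1)
    (hHad : H * H.conjTranspose = (n : ℂ) • 1)
    (R R₁ R₂ C C₁ C₂ : Finset (Fin n))
    (hRne : R.Nonempty) (hR1ne : R₁.Nonempty)
    (hRcover : R ∪ R₁ ∪ R₂ = Finset.univ)
    (hR01 : Disjoint R R₁) (hR02 : Disjoint R R₂) (hR12 : Disjoint R₁ R₂)
    (hCcover : C ∪ C₁ ∪ C₂ = Finset.univ)
    (hC01 : Disjoint C C₁) (hC02 : Disjoint C C₂) (hC12 : Disjoint C₁ C₂)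
    (s : ℂ)
    (h1 : ∀ j ∈ C, ∑ i ∈ R, H i j = s)
    (h2 : ∀ j ∈ C₁, ∑ i ∈ R₁, H i j = -(starRingEnd ℂ) s)
    (h3 : (∀ i ∈ R, ∀ j ∈ C₁, H i j = 1) ∧ (∀ i ∈ R₁, ∀ j ∈ C, H i j = 1))
    (h4 : ∀ j ∈ C₂, ∑ i ∈ R, H i j = 0 ∧ ∑ i ∈ R₁, H i j = 0) :
    ∃ r : ℂ, (R.card : ℂ) * r = (C.card : ℂ) * s ∧
      (∀ i ∈ R, ∑ j ∈ C, H i j = r) ∧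
      (∀ i ∈ R₁, ∑ j ∈ C₁, H i j = -(starRingEnd ℂ) r) ∧
      (∀ i ∈ R₂, ∑ j ∈ C, H i j = 0 ∧ ∑ j ∈ C₁, H i j = 0) :=
  stmt_10_general n H hHad R R₁ R₂ C C₁ C₂ hRne hR1ne hR01 hR02 hR12 hCcover hC01 hC02 hC12 s h1 h2
    h3 h4
end

section
/- Let H and K be real Hadamard matrices of order n with H ≠ K. Then the number of positions (i,j) at which H_{ij} ≠ K_{ij} is at least n. -/
/-- Any trade in a real Hadamard matrix of order `n` has size at least `n`: two distinct
real Hadamard matrices of order `n` differ in at least `n` positions. -/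
theorem stmt_11 (n : ℕ) (H K : Matrix (Fin n) (Fin n) ℝ)
    (hHent : ∀ i j, H i j = 1 ∨ H i j = -1)
    (hHHad : H * H.transpose = (n : ℝ) • 1)
    (hKent : ∀ i j, K i j = 1 ∨ K i j = -1)
    (hKHad : K * K.transpose = (n : ℝ) • 1)
    (hne : H ≠ K) :
    n ≤ Set.ncard {p : Fin n × Fin n | H p.1 p.2 ≠ K p.1 p.2} := by
  classical
  rcases Nat.eq_zero_or_pos n with hn | hn
  · subst hn
    exact absurd (Matrix.ext fun i _ => i.elim0) hne
  have hn0 : (n : ℝ) ≠ 0 := Nat.cast_ne_zero.mpr hn.ne'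
  -- row orthogonality
  have hHo : ∀ i l, ∑ j, H i j * H l j = if i = l then (n : ℝ) else 0 := by
    intro i l
    have := congrFun (congrFun hHHad i) l
    simpa [Matrix.mul_apply, Matrix.transpose_apply, Matrix.smul_apply,
      Matrix.one_apply, mul_ite, mul_one, mul_zero] using this
  have hKo : ∀ i l, ∑ j, K i j * K l j = if i = l then (n : ℝ) else 0 := by
    intro i l
    have := congrFun (congrFun hKHad i) l
    simpa [Matrix.mul_apply, Matrix.transpose_apply, Matrix.smul_apply,
      Matrix.one_apply, mul_ite, mul_one, mul_zero] using this
  -- column orthogonality for H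
  have h2 : H.transpose * H = (n : ℝ) • 1 := by
    have h1 : H * ((n : ℝ)⁻¹ • H.transpose) = 1 := by
      rw [Matrix.mul_smul, hHHad, smul_smul, inv_mul_cancel₀ hn0, one_smul]
    have h3 := mul_eq_one_comm.mp h1
    calc H.transpose * H = (n : ℝ) • (((n : ℝ)⁻¹ • H.transpose) * H) := by
          rw [Matrix.smul_mul, smul_smul, mul_inv_cancel₀ hn0, one_smul]
      _ = (n : ℝ) • 1 := by rw [h3]
  have hHc : ∀ m j, ∑ l, H l m * H l j = if m = j then (n : ℝ) else 0 := by
    intro m j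
    have := congrFun (congrFun h2 m) j
    simpa [Matrix.mul_apply, Matrix.transpose_apply, Matrix.smul_apply,
      Matrix.one_apply, mul_ite, mul_one, mul_zero] using this
  set R : Finset (Fin n) := Finset.univ.filter (fun i => ∃ j, H i j ≠ K i j) with hR
  set d : Fin n → ℕ := fun i => (Finset.univ.filter fun j => H i j ≠ K i j).card with hd
  have hRne : R.Nonempty := by
    by_contra hc
    apply hne
    ext i j
    by_contra hij
    exact hc ⟨i, by simp [hR]; exact ⟨j, hij⟩⟩
  -- key claim
  have key : ∀ i ∈ R, n ≤ R.card * d i := by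
    intro i hiR
    obtain ⟨j₀, hj₀⟩ : ∃ j, H i j ≠ K i j := by simpa [hR] using hiR
    set v : Fin n → ℝ := fun j => H i j - K i j with hv
    have hv4 : ∀ j, H i j ≠ K i j → (v j) ^ 2 = 4 := by
      intro j hj
      rcases hHent i j with h | h <;> rcases hKent i j with k | k
      · exact absurd (h.trans k.symm) hj
      · simp [hv, h, k]; norm_num
      · simp [hv, h, k]; norm_num
      · exact absurd (h.trans k.symm) hj
    have hv0 : ∀ j, H i j = K i j → v j = 0 := fun j hj => by simp [hv, hj]
    have hvsq : ∑ j, (v j) ^ 2 = 4 * d i := by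
      rw [← Finset.sum_filter_of_ne (p := fun j => H i j ≠ K i j)
        (f := fun j => (v j) ^ 2) (by
          intro j _ hf hj
          exact hf (by simp [hv0 j hj]))]
      rw [Finset.sum_congr rfl (fun j hj => hv4 j (Finset.mem_filter.mp hj).2)]
      simp [hd, mul_comm]
    set c : Fin n → ℝ := fun l => ∑ m, v m * H l m with hc
    have hcR : ∀ l ∉ R, c l = 0 := by
      intro l hlR
      have hKl : ∀ m, H l m = K l m := by
        intro m; by_contra hm
        exact hlR (by simp [hR]; exact ⟨m, hm⟩)
      have hil : i ≠ l := by rintro rfl; exact hlR hiR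
      have : c l = (∑ m, H i m * H l m) - ∑ m, K i m * K l m := by
        rw [← Finset.sum_sub_distrib]
        exact Finset.sum_congr rfl fun m _ => by rw [← hKl m]; simp [hc, hv]; ring
      rw [this, hHo, hKo]
      simp [hil]
    have hrec : ∀ j, ∑ l, c l * H l j = n * v j := by
      intro j
      calc ∑ l, c l * H l j = ∑ l, ∑ m, v m * H l m * H l j := by
            simp only [hc, Finset.sum_mul]
        _ = ∑ m, ∑ l, v m * (H l m * H l j) := by
            rw [Finset.sum_comm]; simp [mul_assoc]
        _ = ∑ m, v m * ∑ l, H l m * H l j := by simp [Finset.mul_sum]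
        _ = ∑ m, v m * (if m = j then (n : ℝ) else 0) := by simp [hHc]
        _ = n * v j := by simp [mul_ite, mul_zero, Finset.sum_ite_eq', mul_comm]
    have hcl : ∀ l, c l = ∑ m, v m * H l m := fun l => rfl
    have hcsq : ∑ l, (c l) ^ 2 = n * ∑ m, (v m) ^ 2 := by
      calc ∑ l, (c l) ^ 2 = ∑ l, ∑ m, v m * (c l * H l m) := by
            refine Finset.sum_congr rfl fun l _ => ?_
            rw [sq]
            nth_rewrite 2 [hcl l]
            rw [Finset.mul_sum]
            exact Finset.sum_congr rfl fun m _ => by ring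
        _ = ∑ m, ∑ l, v m * (c l * H l m) := Finset.sum_comm
        _ = ∑ m, v m * (n * v m) := by
            refine Finset.sum_congr rfl fun m _ => ?_
            rw [← Finset.mul_sum, hrec m]
        _ = n * ∑ m, (v m) ^ 2 := by
            rw [Finset.mul_sum]
            exact Finset.sum_congr rfl fun m _ => by ring
    have hsumR : ∑ l ∈ R, c l * H l j₀ = n * v j₀ := by
      rw [← hrec j₀]
      exact Finset.sum_subset (Finset.subset_univ R)
        (fun x _ hx => by rw [hcR x hx, zero_mul])
    have hcs := Finset.sum_mul_sq_le_sq_mul_sq R c (fun l => H l j₀)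
    rw [hsumR] at hcs
    have hHsq : ∑ l ∈ R, (H l j₀) ^ 2 = (R.card : ℝ) := by
      rw [Finset.sum_congr rfl (fun l _ => show (H l j₀) ^ 2 = 1 by
        rcases hHent l j₀ with h | h <;> rw [h] <;> norm_num)]
      simp
    rw [hHsq] at hcs
    have hle : ∑ l ∈ R, (c l) ^ 2 ≤ (n : ℝ) * (4 * d i) := by
      calc ∑ l ∈ R, (c l) ^ 2 ≤ ∑ l, (c l) ^ 2 :=
            Finset.sum_le_sum_of_subset_of_nonneg (Finset.subset_univ R)
              (fun l _ _ => sq_nonneg _)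
        _ = (n : ℝ) * (4 * d i) := by rw [hcsq, hvsq]
    have hvj : (v j₀) ^ 2 = 4 := hv4 j₀ hj₀
    have hfinal : (n : ℝ) ≤ (d i : ℝ) * R.card := by
      have h1 : ((n : ℝ) * v j₀) ^ 2 = 4 * n ^ 2 := by rw [mul_pow, hvj]; ring
      rw [h1] at hcs
      have h2 : 4 * (n : ℝ) ^ 2 ≤ ((n : ℝ) * (4 * d i)) * R.card :=
        le_trans hcs (mul_le_mul_of_nonneg_right hle (Nat.cast_nonneg _))
      have hnpos : (0 : ℝ) < n := by positivity
      nlinarith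
    exact_mod_cast (by push_cast; linarith [hfinal] : (n : ℝ) ≤ (R.card * d i : ℕ))
  -- assemble
  have hset : {p : Fin n × Fin n | H p.1 p.2 ≠ K p.1 p.2} =
      ↑(Finset.univ.filter fun p : Fin n × Fin n => H p.1 p.2 ≠ K p.1 p.2) := by
    ext p; simp
  rw [hset, Set.ncard_coe_finset]
  have hcard : (Finset.univ.filter fun p : Fin n × Fin n => H p.1 p.2 ≠ K p.1 p.2).card
      = ∑ i, d i := by
    rw [Finset.card_filter]
    rw [Fintype.sum_prod_type]
    exact Finset.sum_congr rfl fun i _ => (Finset.card_filter _ _).symm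
  rw [hcard]
  have h3 : R.card * n ≤ R.card * ∑ i, d i := by
    calc R.card * n = ∑ _i ∈ R, n := by rw [Finset.sum_const, smul_eq_mul]
      _ ≤ ∑ i ∈ R, R.card * d i := Finset.sum_le_sum key
      _ = R.card * ∑ i ∈ R, d i := by rw [Finset.mul_sum]
      _ ≤ R.card * ∑ i, d i := Nat.mul_le_mul_left _
          (Finset.sum_le_sum_of_subset (Finset.subset_univ R))
  exact Nat.le_of_mul_le_mul_left h3 (Finset.card_pos.mpr hRne)
end

section
/- Let H be a complex Hadamard matrix of order n, let B be a set of columns of H with |B| = b ≥ 1, and let c : {1,…,n} → ℂ be coefficients supported on B (c_j = 0 for j ∉ B). If the linear combination α of the columns of H given by α_i = Σ_j c_j H_{ij} is not the zero vector, then α has at least ⌈n/b⌉ non-zero entries. -/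
/-!
Since `H Hᴴ = n • 1` forces `Hᴴ H = n • 1`, the map `c ↦ H c` scales squared norms by `n`
(Parseval), so `∑ᵢ |αᵢ|² = n ∑ⱼ |cⱼ|²`. On the other hand every entry of `H` has modulus one and
`c` lives on `b` coordinates, so by Cauchy–Schwarz `|αᵢ|² ≤ b ∑ⱼ |cⱼ|²` for each `i`. Comparing the
two bounds, at least `n / b` of the `αᵢ` are non-zero.
-/

open Finset Matrix

theorem Matrix.mul_eq_smul_one_comm {K ι : Type*} [Field K] [Fintype ι] [DecidableEq ι]
    {A B : Matrix ι ι K} {r : K} (hr : r ≠ 0) (h : A * B = r • 1) : B * A = r • 1 := by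
  have hAB : A * (r⁻¹ • B) = 1 := by
    rw [Matrix.mul_smul, h, smul_smul, inv_mul_cancel₀ hr, one_smul]
  calc B * A = r • ((r⁻¹ • B) * A) := by
        rw [Matrix.smul_mul, smul_smul, mul_inv_cancel₀ hr, one_smul]
    _ = r • 1 := by rw [mul_eq_one_comm.mp hAB]

theorem RCLike.sum_norm_sq_eq_star_dotProduct {𝕜 ι : Type*} [RCLike 𝕜] [Fintype ι]
    (v : ι → 𝕜) :
    ((∑ i, ‖v i‖ ^ 2 : ℝ) : 𝕜) = star v ⬝ᵥ v := by
  simp [dotProduct, RCLike.conj_mul]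

theorem Matrix.sum_norm_sq_mulVec_of_conjTranspose_mul_self {𝕜 m n : Type*} [RCLike 𝕜]
    [Fintype m] [Fintype n] [DecidableEq n] {H : Matrix m n 𝕜} {r : ℝ}
    (hH : Hᴴ * H = (r : 𝕜) • 1) (c : n → 𝕜) :
    ∑ i, ‖(H *ᵥ c) i‖ ^ 2 = r * ∑ j, ‖c j‖ ^ 2 := by
  apply RCLike.ofReal_injective (K := 𝕜)
  rw [RCLike.ofReal_mul, RCLike.sum_norm_sq_eq_star_dotProduct,
    RCLike.sum_norm_sq_eq_star_dotProduct, star_mulVec, ← dotProduct_mulVec, mulVec_mulVec, hH,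
    smul_mulVec, one_mulVec, dotProduct_smul, smul_eq_mul]

theorem norm_sum_mul_sq_le_card_mul {R ι : Type*} [SeminormedRing R] [Fintype ι]
    {a c : ι → R} (ha : ∀ j, ‖a j‖ ≤ 1) {s : Finset ι} (hc : ∀ j ∉ s, c j = 0) :
    ‖∑ j, a j * c j‖ ^ 2 ≤ #s * ∑ j, ‖c j‖ ^ 2 := by
  have hsum_s : ∑ j, a j * c j = ∑ j ∈ s, a j * c j :=
    (sum_subset (subset_univ s) fun j _ hj => by rw [hc j hj, mul_zero]).symm
  have hsq_s : ∑ j, ‖c j‖ ^ 2 = ∑ j ∈ s, ‖c j‖ ^ 2 :=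
    (sum_subset (subset_univ s) fun j _ hj => by rw [hc j hj, norm_zero, sq, zero_mul]).symm
  have hle : ‖∑ j ∈ s, a j * c j‖ ≤ ∑ j ∈ s, ‖c j‖ :=
    (norm_sum_le _ _).trans <| sum_le_sum fun j _ =>
      (norm_mul_le _ _).trans (mul_le_of_le_one_left (norm_nonneg _) (ha j))
  calc ‖∑ j, a j * c j‖ ^ 2 ≤ (∑ j ∈ s, ‖c j‖) ^ 2 := by
        rw [hsum_s]; exact pow_le_pow_left₀ (norm_nonneg _) hle 2
    _ ≤ #s * ∑ j, ‖c j‖ ^ 2 := hsq_s ▸ sq_sum_le_card_mul_sum_sq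

theorem sum_norm_sq_le_ncard_support_mul {E ι : Type*} [NormedAddCommGroup E] [Fintype ι]
    {v : ι → E} {M : ℝ} (hv : ∀ i, ‖v i‖ ^ 2 ≤ M) :
    ∑ i, ‖v i‖ ^ 2 ≤ {i | v i ≠ 0}.ncard * M := by
  classical
  rw [Set.ncard_eq_toFinset_card', Set.toFinset_ofPred,
    ← sum_filter_of_ne fun i _ hi => by simpa using hi]
  simpa using sum_le_sum fun i (_ : i ∈ univ.filter fun i => v i ≠ 0) => hv i

/-- Lemma 2.2 of Ó Catháin–Wanless: a non-zero linear combination of `b` columns of a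
complex Hadamard matrix of order `n` has at least `⌈n/b⌉` non-zero entries. -/
theorem stmt_12 (n : ℕ) (H : Matrix (Fin n) (Fin n) ℂ)
    (hent : ∀ i j, ‖H i j‖ = 1)
    (hHad : H * H.conjTranspose = (n : ℂ) • 1)
    (B : Finset (Fin n)) (b : ℕ) (hb : B.card = b) (hb1 : 1 ≤ b)
    (c : Fin n → ℂ) (hc : ∀ j ∉ B, c j = 0)
    (α : Fin n → ℂ) (hα : ∀ i, α i = ∑ j : Fin n, c j * H i j)
    (hne : α ≠ 0) :
    n ⌈/⌉ b ≤ Set.ncard {i : Fin n | α i ≠ 0} := by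
  subst hb
  have hαH : α = H *ᵥ c := funext fun i => by simp [hα, mulVec, dotProduct, mul_comm]
  have hn : (n : ℂ) ≠ 0 := by
    rcases n with _ | n
    · exact absurd (Subsingleton.elim _ _) hne
    · exact Nat.cast_ne_zero.mpr n.succ_ne_zero
  have hc0 : c ≠ 0 := by rintro rfl; simp [hαH] at hne
  have hCpos : 0 < ∑ j, ‖c j‖ ^ 2 := by
    obtain ⟨j, hj⟩ := Function.ne_iff.mp hc0
    exact sum_pos' (fun j _ => by positivity) ⟨j, mem_univ j, pow_pos (norm_pos_iff.mpr hj) 2⟩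
  have hcols : Hᴴ * H = ((n : ℝ) : ℂ) • 1 := by
    simpa using mul_eq_smul_one_comm hn hHad
  have hparseval : ∑ i, ‖α i‖ ^ 2 = n * ∑ j, ‖c j‖ ^ 2 :=
    hαH ▸ sum_norm_sq_mulVec_of_conjTranspose_mul_self hcols c
  have hpoint : ∀ i, ‖α i‖ ^ 2 ≤ #B * ∑ j, ‖c j‖ ^ 2 := fun i => by
    simpa [hα, mul_comm] using norm_sum_mul_sq_le_card_mul (fun j => (hent i j).le) hc
  rw [ceilDiv_le_iff_le_mul hb1]
  have hreal : (n : ℝ) * ∑ j, ‖c j‖ ^ 2 ≤ #B * {i | α i ≠ 0}.ncard * ∑ j, ‖c j‖ ^ 2 := by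
    rw [← hparseval, mul_comm (#B : ℝ), mul_assoc]
    exact sum_norm_sq_le_ncard_support_mul hpoint
  exact_mod_cast le_of_mul_le_mul_right hreal hCpos
end

section
/- Let H and K be complex Hadamard matrices of order n with H ≠ K. Then the number of positions (i,j) at which H_{ij} ≠ K_{ij} is at least n. -/
/-!
Let `D = H - K` and let `R` be the set of its nonzero rows. Because `H Hᴴ = K Kᴴ`, the vector
`D r Hᴴ` vanishes at every `t ∉ R`, for any `r`. On the other hand `Hᴴ` is unimodular with
`Hᴴ H = n`, and such a matrix obeys the Donoho–Stark uncertainty principle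
`n ‖x‖_∞ ≤ ‖x Hᴴ‖₁ ≤ |supp (x Hᴴ)| ‖x‖₁ ≤ |supp (x Hᴴ)| |supp x| ‖x‖_∞`.
Hence `n ≤ |R| |supp (D r)|` for every `r ∈ R`, and summing over `r ∈ R` gives
`n ≤ ∑ r, |supp (D r)| = |supp D|`.
-/

open Finset Function Matrix

section Support

variable {ι κ M : Type*} [Fintype ι] [Zero M]

theorem Function.ncard_support_eq_card_filter [DecidableEq M] (f : ι → M) :
    (support f).ncard = #{i | f i ≠ 0} := by
  rw [← Set.ncard_coe_finset]
  congr 1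
  ext i
  simp

theorem Function.sum_norm_le_ncard_support_mul {E : Type*} [SeminormedAddCommGroup E]
    {f : ι → E} {C : ℝ} (hf : ∀ i, ‖f i‖ ≤ C) :
    ∑ i, ‖f i‖ ≤ (support f).ncard * C := by
  classical
  have hsum : ∑ i with f i ≠ 0, ‖f i‖ = ∑ i, ‖f i‖ :=
    sum_filter_of_ne fun i _ hi h ↦ hi (by rw [h, norm_zero])
  rw [ncard_support_eq_card_filter, ← hsum, ← nsmul_eq_mul]
  exact sum_le_card_nsmul _ _ _ fun i _ ↦ hf i

theorem Function.ncard_support_uncurry [Fintype κ] (D : ι → κ → M) :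
    (support (uncurry D)).ncard = ∑ i, (support (D i)).ncard := by
  classical
  simp only [ncard_support_eq_card_filter, card_filter, Fintype.sum_prod_type, uncurry_apply_pair]
  congr!

theorem Function.le_ncard_support_uncurry [Fintype κ] {D : ι → κ → M} (hD : D ≠ 0) {n : ℕ}
    (h : ∀ i, D i ≠ 0 → n ≤ (support D).ncard * (support (D i)).ncard) :
    n ≤ (support (uncurry D)).ncard := by
  classical
  set R : Finset ι := {i | D i ≠ 0}
  have hR : (support D).ncard = #R := ncard_support_eq_card_filter D
  have hR_pos : 0 < #R := by
    obtain ⟨i, hi⟩ := Function.ne_iff.mp hD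
    exact card_pos.mpr ⟨i, mem_filter.mpr ⟨mem_univ i, hi⟩⟩
  rw [hR] at h
  refine Nat.le_of_mul_le_mul_left ?_ hR_pos
  calc #R * n = ∑ i ∈ R, n := by rw [sum_const, smul_eq_mul]
    _ ≤ ∑ i ∈ R, #R * (support (D i)).ncard := sum_le_sum fun i hi ↦ h i (mem_filter.mp hi).2
    _ = #R * ∑ i ∈ R, (support (D i)).ncard := (mul_sum _ _ _).symm
    _ ≤ #R * (support (uncurry D)).ncard := by
      rw [ncard_support_uncurry]
      exact Nat.mul_le_mul_left _ (sum_le_sum_of_subset (subset_univ R))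

end Support

section Hadamard

variable {ι κ 𝕜 : Type*} [RCLike 𝕜]

theorem Matrix.conjTranspose_mul_self_eq_smul_one_s13 [Fintype ι] [DecidableEq ι]
    {H : Matrix ι ι 𝕜} {c : 𝕜} (hc : c ≠ 0) (hH : H * Hᴴ = c • 1) : Hᴴ * H = c • 1 := by
  have hinv : H * (c⁻¹ • Hᴴ) = 1 := by
    rw [Matrix.mul_smul, hH, smul_smul, inv_mul_cancel₀ hc, one_smul]
  rw [← mul_eq_one_comm.mp hinv, Matrix.smul_mul, smul_smul, mul_inv_cancel₀ hc, one_smul]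

theorem Matrix.norm_vecMul_apply_le_sum_norm [Fintype ι] {A : Matrix ι κ 𝕜}
    (hA : ∀ i j, ‖A i j‖ ≤ 1) (v : ι → 𝕜) (j : κ) : ‖(v ᵥ* A) j‖ ≤ ∑ i, ‖v i‖ :=
  calc ‖(v ᵥ* A) j‖ ≤ ∑ i, ‖v i * A i j‖ := norm_sum_le _ _
    _ ≤ ∑ i, ‖v i‖ := sum_le_sum fun i _ ↦ by
      rw [norm_mul]; exact mul_le_of_le_one_right (norm_nonneg _) (hA i j)

theorem Matrix.norm_le_ncard_support_mul_ncard_support_vecMul [Fintype ι] [Fintype κ]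
    [DecidableEq ι] {V : Matrix ι κ 𝕜} {c : 𝕜} (hV : V * Vᴴ = c • 1)
    (hV_le : ∀ i j, ‖V i j‖ ≤ 1) {x : ι → 𝕜} (hx : x ≠ 0) :
    ‖c‖ ≤ (support x).ncard * (support (x ᵥ* V)).ncard := by
  obtain ⟨i, hi⟩ := Function.ne_iff.mp hx
  obtain ⟨i₀, -, hi₀⟩ := exists_max_image univ (‖x ·‖) ⟨i, mem_univ i⟩
  have hxi₀ : 0 < ‖x i₀‖ := (norm_pos_iff.mpr hi).trans_le (hi₀ i (mem_univ i))
  have hw : ∀ j, ‖(x ᵥ* V) j‖ ≤ (support x).ncard * ‖x i₀‖ := fun j ↦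
    (norm_vecMul_apply_le_sum_norm hV_le x j).trans
      (sum_norm_le_ncard_support_mul fun i ↦ hi₀ i (mem_univ i))
  have hVH_le : ∀ j i, ‖Vᴴ j i‖ ≤ 1 := fun j i ↦ by
    rw [conjTranspose_apply, norm_star]; exact hV_le i j
  have hrec : x ᵥ* V ᵥ* Vᴴ = c • x := by rw [vecMul_vecMul, hV, vecMul_smul, vecMul_one]
  have key : ‖c‖ * ‖x i₀‖ ≤ (support (x ᵥ* V)).ncard * ((support x).ncard * ‖x i₀‖) :=
    calc ‖c‖ * ‖x i₀‖ = ‖(x ᵥ* V ᵥ* Vᴴ) i₀‖ := by rw [hrec, Pi.smul_apply, norm_smul]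
      _ ≤ ∑ j, ‖(x ᵥ* V) j‖ := norm_vecMul_apply_le_sum_norm hVH_le _ i₀
      _ ≤ _ := sum_norm_le_ncard_support_mul hw
  rw [← mul_assoc, mul_comm (_ : ℝ) ((support x).ncard : ℝ)] at key
  exact le_of_mul_le_mul_right key hxi₀

theorem Matrix.sub_mul_conjTranspose_apply_eq_zero [Fintype κ] {H K : Matrix ι κ 𝕜}
    (hHK : H * Hᴴ = K * Kᴴ) {t : ι} (ht : H t = K t) (r : ι) : ((H - K) * Hᴴ) r t = 0 := by
  rw [Matrix.sub_mul, Matrix.sub_apply, hHK, sub_eq_zero]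
  simp only [mul_apply, conjTranspose_apply, ht]

end Hadamard

theorem stmt_13_general (n : ℕ) (H K : Matrix (Fin n) (Fin n) ℂ)
    (hHent : ∀ i j, ‖H i j‖ = 1)
    (hHHad : H * H.conjTranspose = (n : ℂ) • 1)
    (hKHad : K * K.conjTranspose = (n : ℂ) • 1)
    (hne : H ≠ K) :
    n ≤ Set.ncard {p : Fin n × Fin n | H p.1 p.2 ≠ K p.1 p.2} := by
  rcases n.eq_zero_or_pos with rfl | hn
  · exact Nat.zero_le _
  set D := H - K
  have hHH : Hᴴ * H = (n : ℂ) • 1 :=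
    conjTranspose_mul_self_eq_smul_one_s13 (Nat.cast_ne_zero.mpr hn.ne') hHHad
  have hHH_le : ∀ i j, ‖Hᴴ i j‖ ≤ 1 := fun i j ↦ by
    rw [conjTranspose_apply, norm_star, hHent]
  have hset : {p : Fin n × Fin n | H p.1 p.2 ≠ K p.1 p.2} = support (uncurry D) := by
    ext ⟨i, j⟩; exact not_congr sub_eq_zero.symm
  rw [hset]
  refine le_ncard_support_uncurry (sub_ne_zero.mpr hne) fun r hr ↦ ?_
  have hrow : support (D r ᵥ* Hᴴ) ⊆ support D := fun t ht hDt ↦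
    ht (sub_mul_conjTranspose_apply_eq_zero (hHHad.trans hKHad.symm) (sub_eq_zero.mp hDt) r)
  have hbound := norm_le_ncard_support_mul_ncard_support_vecMul
    (by rwa [conjTranspose_conjTranspose]) hHH_le hr
  rw [Complex.norm_natCast] at hbound
  calc n ≤ (support (D r)).ncard * (support (D r ᵥ* Hᴴ)).ncard := by exact_mod_cast hbound
    _ ≤ (support (D r)).ncard * (support D).ncard :=
      Nat.mul_le_mul_left _ (Set.ncard_le_ncard hrow)
    _ = (support D).ncard * (support (D r)).ncard := mul_comm _ _

/-- Any trade in a complex Hadamard matrix of order `n` has size at least `n`: two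
distinct complex Hadamard matrices of order `n` differ in at least `n` positions. -/
theorem stmt_13 (n : ℕ) (H K : Matrix (Fin n) (Fin n) ℂ)
    (hHent : ∀ i j, ‖H i j‖ = 1)
    (hHHad : H * H.conjTranspose = (n : ℂ) • 1)
    (hKent : ∀ i j, ‖K i j‖ = 1)
    (hKHad : K * K.conjTranspose = (n : ℂ) • 1)
    (hne : H ≠ K) :
    n ≤ Set.ncard {p : Fin n × Fin n | H p.1 p.2 ≠ K p.1 p.2} :=
  stmt_13_general n H K hHent hHHad hKHad hne
end

section
/- Let H and K be complex Hadamard matrices of order n with H ≠ K, let D = {(i,j) : H_{ij} ≠ K_{ij}}, let r be a row of H meeting D for which the number of columns j with (r,j) ∈ D is minimal among all rows meeting D, and let B = {j : (r,j) ∈ D}. Then the coefficients c_j = conj(H_{rj}) − conj(K_{rj}), which are supported on B and non-zero for every j ∈ B, satisfy Σ_{j∈B} c_j H_{ij} = 0 for every row i of H in which H and K agree in every column; that is, there is a non-trivial linear combination of the |B| columns of H indexed by B that vanishes at every row not meeting D. -/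
theorem Matrix.sum_star_mul_eq_zero_of_mul_conjTranspose_eq_smul_one
    {m R : Type*} [Fintype m] [DecidableEq m] [CommSemiring R] [StarRing R]
    {A : Matrix m m R} {c : R} (hA : A * A.conjTranspose = c • 1) {i r : m} (hir : i ≠ r) :
    ∑ j, star (A r j) * A i j = 0 := by
  simpa [Matrix.mul_apply, mul_comm, hir] using congrFun₂ hA i r

theorem stmt_14_general (n : ℕ) (H K : Matrix (Fin n) (Fin n) ℂ)
    (hHHad : H * H.conjTranspose = (n : ℂ) • 1)
    (hKHad : K * K.conjTranspose = (n : ℂ) • 1)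
    (r : Fin n) (hr : ∃ j, H r j ≠ K r j) :
    (∀ j, H r j = K r j → (starRingEnd ℂ) (H r j) - (starRingEnd ℂ) (K r j) = 0) ∧
    (∀ j, H r j ≠ K r j → (starRingEnd ℂ) (H r j) - (starRingEnd ℂ) (K r j) ≠ 0) ∧
    (∀ i : Fin n, (∀ j, H i j = K i j) →
      ∑ j : Fin n, ((starRingEnd ℂ) (H r j) - (starRingEnd ℂ) (K r j)) * H i j = 0) := by
  refine ⟨fun j h => by rw [h, sub_self],
    fun j h => sub_ne_zero.mpr ((starRingEnd ℂ).injective.ne h), fun i hi => ?_⟩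
  have hir : i ≠ r := by
    rintro rfl
    obtain ⟨j, hj⟩ := hr
    exact hj (hi j)
  have hH := Matrix.sum_star_mul_eq_zero_of_mul_conjTranspose_eq_smul_one hHHad hir
  -- row `i` of `K` is row `i` of `H`, so it is orthogonal to row `r` of `K` as well
  have hK := Matrix.sum_star_mul_eq_zero_of_mul_conjTranspose_eq_smul_one hKHad hir
  simp only [← hi] at hK
  simp only [starRingEnd_apply, sub_mul, Finset.sum_sub_distrib, hH, hK, sub_zero]

/-- From the proof of Theorem `floorgen`: if `H` and `K` are distinct complex Hadamard
matrices, `r` is a row meeting the set `D` of differing positions in a minimal number `b`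
of columns, and `B = {j : (r,j) ∈ D}`, then the coefficients `c j = conj (H r j) - conj (K r j)`
are supported on `B`, non-zero on `B`, and the linear combination `∑ j, c j * H i j` of
the columns indexed by `B` vanishes at every row `i` not meeting `D`. -/
theorem stmt_14 (n : ℕ) (H K : Matrix (Fin n) (Fin n) ℂ)
    (hHent : ∀ i j, ‖H i j‖ = 1)
    (hHHad : H * H.conjTranspose = (n : ℂ) • 1)
    (hKent : ∀ i j, ‖K i j‖ = 1)
    (hKHad : K * K.conjTranspose = (n : ℂ) • 1)
    (hne : H ≠ K)
    (r : Fin n) (hr : ∃ j, H r j ≠ K r j)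
    (hmin : ∀ i : Fin n, (∃ j, H i j ≠ K i j) →
      Set.ncard {j : Fin n | H r j ≠ K r j} ≤ Set.ncard {j : Fin n | H i j ≠ K i j}) :
    (∀ j, H r j = K r j → (starRingEnd ℂ) (H r j) - (starRingEnd ℂ) (K r j) = 0) ∧
    (∀ j, H r j ≠ K r j → (starRingEnd ℂ) (H r j) - (starRingEnd ℂ) (K r j) ≠ 0) ∧
    (∀ i : Fin n, (∀ j, H i j = K i j) →
      ∑ j : Fin n, ((starRingEnd ℂ) (H r j) - (starRingEnd ℂ) (K r j)) * H i j = 0) :=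
  stmt_14_general n H K hHHad hKHad r hr
end

section
/- Let m ≥ 2 and let H be a real Hadamard matrix of order 4m whose first four rows equal Q ⊗ j_m, where Q is the 4 × 4 matrix with rows (1,1,1,1), (1,−1,1,−1), (1,1,−1,−1), (1,−1,−1,1) and j_m is the all-ones row vector of length m. Then for every row r of H other than the first four and for each c ∈ {1,2,3,4}, the sum of the m entries of r lying in the c-th block of m consecutive columns equals 0; consequently m is even. -/
/-- Closed quadruples: if a real Hadamard matrix of order `4m` (rows indexed by
`Fin 4 ⊕ Fin (4*(m-1))`, columns by `Fin 4 × Fin m`) has first four rows `Q ⊗ j_m`, then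
every subsequent row has each of its four blocks of `m` entries summing to `0`, and
consequently `m` is even. -/
theorem stmt_15 (m : ℕ) (hm : 2 ≤ m)
    (Q : Matrix (Fin 4) (Fin 4) ℝ)
    (hQ : Q = !![1, 1, 1, 1; 1, -1, 1, -1; 1, 1, -1, -1; 1, -1, -1, 1])
    (H : Matrix (Fin 4 ⊕ Fin (4 * (m - 1))) (Fin 4 × Fin m) ℝ)
    (hent : ∀ r c, H r c = 1 ∨ H r c = -1)
    (hHad : H * H.transpose = ((4 * m : ℕ) : ℝ) • 1)
    (hrows : ∀ (i : Fin 4) (c : Fin 4) (u : Fin m), H (Sum.inl i) (c, u) = Q i c) :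
    (∀ (r : Fin (4 * (m - 1))) (c : Fin 4), ∑ u : Fin m, H (Sum.inr r) (c, u) = 0) ∧
      Even m := by
  have key : ∀ (r : Fin (4*(m-1))) (i : Fin 4),
      ∑ c : Fin 4, Q i c * (∑ u : Fin m, H (Sum.inr r) (c,u)) = 0 := by
    intro r i
    have h := congrFun (congrFun hHad (Sum.inl i)) (Sum.inr r)
    simp [Matrix.mul_apply, Matrix.one_apply] at h
    rw [← h, Fintype.sum_prod_type]
    congr 1; ext c
    rw [Finset.mul_sum]
    congr 1; ext u
    rw [hrows]
  have zeros : ∀ (r : Fin (4 * (m - 1))) (c : Fin 4),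
      ∑ u : Fin m, H (Sum.inr r) (c, u) = 0 := by
    intro r c
    have k0 := key r 0
    have k1 := key r 1
    have k2 := key r 2
    have k3 := key r 3
    simp [hQ, Fin.sum_univ_four] at k0 k1 k2 k3
    have e0 : ∑ u : Fin m, H (Sum.inr r) (0, u) = 0 := by linarith
    have e1 : ∑ u : Fin m, H (Sum.inr r) (1, u) = 0 := by linarith
    have e2 : ∑ u : Fin m, H (Sum.inr r) (2, u) = 0 := by linarith
    have e3 : ∑ u : Fin m, H (Sum.inr r) (3, u) = 0 := by linarith
    fin_cases c
    · exact e0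
    · exact e1
    · exact e2
    · exact e3
  refine ⟨zeros, ?_⟩
  have hmpos : 0 < 4 * (m-1) := by omega
  set r0 : Fin (4*(m-1)) := ⟨0, hmpos⟩
  set A := Finset.univ.filter (fun u : Fin m => H (Sum.inr r0) (0, u) = 1) with hA
  have h1 : ∑ u : Fin m, (H (Sum.inr r0) (0, u) + 1) = (m : ℝ) := by
    rw [Finset.sum_add_distrib, zeros r0 0]
    simp
  have h2 : ∑ u : Fin m, (H (Sum.inr r0) (0, u) + 1) = 2 * A.card := by
    rw [Finset.sum_congr rfl (g := fun u => if H (Sum.inr r0) (0, u) = 1 then (2:ℝ) else 0)]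
    · rw [Finset.sum_ite, Finset.sum_const, Finset.sum_const]
      simp [hA, mul_comm]
    · intro u _
      rcases hent (Sum.inr r0) (0, u) with h | h <;> norm_num [h]
  have : (m : ℝ) = 2 * A.card := by rw [← h1, h2]
  have : m = 2 * A.card := by exact_mod_cast this
  exact ⟨A.card, by omega⟩
end

section
/- Let m ≥ 1 and let H be a real Hadamard matrix of order 4m whose first four rows equal Q ⊗ j_m, where Q is the 4 × 4 matrix with rows (1,1,1,1), (1,−1,1,−1), (1,1,−1,−1), (1,−1,−1,1) and j_m is the all-ones row vector of length m. Then for any c ∈ {1,2,3,4}, the matrix K obtained from H by negating every entry lying simultaneously in the first four rows and in the c-th block of m consecutive columns is a real Hadamard matrix of order 4m. -/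
/-!
The first four rows of `H` are constant on each column block, so the inner product of such a row
with a lower row `r` is `∑ c, Q i c * s r c`, where `s r c` is the sum of row `r` over block `c`.
Orthogonality of the rows of `H` thus says `Q * sᵀ = 0`, and as `Q` is invertible every block sum
of every lower row vanishes. Rescaling the top rows blockwise by signs then changes neither the
top–top inner products (the signs square to `1`) nor the top–bottom ones (they stay `0`).
-/

open Matrix

section BlockSwitching

variable {R α β δ : Type*} [CommRing R] [Fintype α] [Fintype δ]

theorem sum_block_eq_zero_of_topRows_eq [DecidableEq α] (Q : Matrix α α R) (hQ : IsUnit Q.det)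
    (H : Matrix (α ⊕ β) (α × δ) R) (htop : ∀ i c u, H (Sum.inl i) (c, u) = Q i c)
    (horth : ∀ i r, (H * Hᵀ) (Sum.inl i) (Sum.inr r) = 0) (r : β) (c : α) :
    ∑ u, H (Sum.inr r) (c, u) = 0 := by
  set S : Matrix α β R := Matrix.of fun c r => ∑ u, H (Sum.inr r) (c, u)
  have hQS : Q * S = 0 := by
    ext i r
    rw [Matrix.zero_apply, ← horth i r, mul_apply, mul_apply, Fintype.sum_prod_type]
    simp only [S, of_apply, transpose_apply, htop, Finset.mul_sum]
  have hS : S = 0 := by rw [← nonsing_inv_mul_cancel_left Q S hQ, hQS, Matrix.mul_zero]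
  exact congrFun (congrFun hS c) r

theorem sum_mul_eq_zero_of_sum_block_eq_zero (w : α → R) (v : α × δ → R)
    (hv : ∀ c, ∑ u, v (c, u) = 0) : ∑ x, w x.1 * v x = 0 := by
  simp [Fintype.sum_prod_type, ← Finset.mul_sum, hv]

theorem mul_transpose_eq_of_switch_topRows (Q : Matrix α α R) (H K : Matrix (α ⊕ β) (α × δ) R)
    (htop : ∀ i c u, H (Sum.inl i) (c, u) = Q i c)
    (hsum : ∀ r c, ∑ u, H (Sum.inr r) (c, u) = 0)
    (ε : α → R) (hε : ∀ c, ε c * ε c = 1)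
    (hKtop : ∀ i c u, K (Sum.inl i) (c, u) = ε c * H (Sum.inl i) (c, u))
    (hKbot : ∀ r x, K (Sum.inr r) x = H (Sum.inr r) x) :
    K * Kᵀ = H * Hᵀ := by
  have hKtop' : ∀ i c u, K (Sum.inl i) (c, u) = ε c * Q i c := by simp [hKtop, htop]
  ext (i | r) (j | s) <;> simp only [mul_apply, transpose_apply]
  · refine Finset.sum_congr rfl fun ⟨c, u⟩ _ => ?_
    rw [hKtop, hKtop]
    linear_combination (H (Sum.inl i) (c, u) * H (Sum.inl j) (c, u)) * hε c
  · simp only [hKtop', hKbot, htop]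
    rw [sum_mul_eq_zero_of_sum_block_eq_zero (fun c => ε c * Q i c) _ (hsum s),
      sum_mul_eq_zero_of_sum_block_eq_zero (Q i) _ (hsum s)]
  · simp only [hKtop', hKbot, htop, mul_comm (H (Sum.inr r) _)]
    rw [sum_mul_eq_zero_of_sum_block_eq_zero (fun c => ε c * Q j c) _ (hsum r),
      sum_mul_eq_zero_of_sum_block_eq_zero (Q j) _ (hsum r)]
  · simp only [hKbot]

end BlockSwitching

theorem stmt_16_general (m : ℕ)
    (Q : Matrix (Fin 4) (Fin 4) ℝ)
    (hQ : Q = !![1, 1, 1, 1; 1, -1, 1, -1; 1, 1, -1, -1; 1, -1, -1, 1])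
    (H : Matrix (Fin 4 ⊕ Fin (4 * (m - 1))) (Fin 4 × Fin m) ℝ)
    (hent : ∀ r c, H r c = 1 ∨ H r c = -1)
    (hHad : H * H.transpose = ((4 * m : ℕ) : ℝ) • 1)
    (hrows : ∀ (i : Fin 4) (c : Fin 4) (u : Fin m), H (Sum.inl i) (c, u) = Q i c)
    (c₀ : Fin 4)
    (K : Matrix (Fin 4 ⊕ Fin (4 * (m - 1))) (Fin 4 × Fin m) ℝ)
    (hK₁ : ∀ (i : Fin 4) (c : Fin 4) (u : Fin m), K (Sum.inl i) (c, u) =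
      if c = c₀ then -H (Sum.inl i) (c, u) else H (Sum.inl i) (c, u))
    (hK₂ : ∀ (r : Fin (4 * (m - 1))) (c : Fin 4 × Fin m), K (Sum.inr r) c = H (Sum.inr r) c) :
    (∀ r c, K r c = 1 ∨ K r c = -1) ∧ K * K.transpose = ((4 * m : ℕ) : ℝ) • 1 := by
  have hQdet : IsUnit Q.det := by
    refine isUnit_det_of_left_inverse (B := (4⁻¹ : ℝ) • Q) ?_
    subst hQ
    ext i j
    fin_cases i <;> fin_cases j <;> simp [mul_apply, Fin.sum_univ_four] <;> norm_num
  have hsum := sum_block_eq_zero_of_topRows_eq Q hQdet H hrows (fun i r => by simp [hHad])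
  refine ⟨?_, ?_⟩
  · rintro (i | r) ⟨c, u⟩
    · rw [hK₁]
      rcases hent (Sum.inl i) (c, u) with h | h <;> split_ifs <;> simp [h]
    · rw [hK₂]
      exact hent _ _
  · rw [← hHad]
    exact mul_transpose_eq_of_switch_topRows Q H K hrows hsum (fun c => if c = c₀ then -1 else 1)
      (fun c => by split_ifs <;> norm_num) (fun i c u => by rw [hK₁]; split_ifs <;> simp) hK₂

/-- Switching a closed quadruple: if a real Hadamard matrix of order `4m` (rows indexed by
`Fin 4 ⊕ Fin (4*(m-1))`, columns by `Fin 4 × Fin m`) has first four rows `Q ⊗ j_m`, then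
negating the entries lying in the first four rows and in the `c₀`-th block of `m` columns
yields a real Hadamard matrix of order `4m`. -/
theorem stmt_16 (m : ℕ) (hm : 1 ≤ m)
    (Q : Matrix (Fin 4) (Fin 4) ℝ)
    (hQ : Q = !![1, 1, 1, 1; 1, -1, 1, -1; 1, 1, -1, -1; 1, -1, -1, 1])
    (H : Matrix (Fin 4 ⊕ Fin (4 * (m - 1))) (Fin 4 × Fin m) ℝ)
    (hent : ∀ r c, H r c = 1 ∨ H r c = -1)
    (hHad : H * H.transpose = ((4 * m : ℕ) : ℝ) • 1)
    (hrows : ∀ (i : Fin 4) (c : Fin 4) (u : Fin m), H (Sum.inl i) (c, u) = Q i c)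
    (c₀ : Fin 4)
    (K : Matrix (Fin 4 ⊕ Fin (4 * (m - 1))) (Fin 4 × Fin m) ℝ)
    (hK₁ : ∀ (i : Fin 4) (c : Fin 4) (u : Fin m), K (Sum.inl i) (c, u) =
      if c = c₀ then -H (Sum.inl i) (c, u) else H (Sum.inl i) (c, u))
    (hK₂ : ∀ (r : Fin (4 * (m - 1))) (c : Fin 4 × Fin m), K (Sum.inr r) c = H (Sum.inr r) c) :
    (∀ r c, K r c = 1 ∨ K r c = -1) ∧ K * K.transpose = ((4 * m : ℕ) : ℝ) • 1 :=
  stmt_16_general m Q hQ H hent hHad hrows c₀ K hK₁ hK₂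
end

section
/- Let H be a complex Hadamard matrix of order mn whose rows and columns are each partitioned into n consecutive groups of size m, giving m × m blocks H_{ij} for 1 ≤ i,j ≤ n, and suppose H is of weak Bush type: J H_{ij} = H_{ij} J = δ_{ij} m J for all i, j, where J is the m × m all-ones matrix (equivalently, every row and every column of H_{ij} sums to m when i = j and to 0 when i ≠ j). Then for every index i₀ ∈ {1,…,n} and every c ∈ ℂ with |c| = 1, the matrix obtained from H by multiplying every entry of the diagonal block H_{i₀ i₀} by c is a complex Hadamard matrix of order mn. -/
/-!
Unimodular numbers summing to their count are all `1`, so the row sums of the weak Bush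
condition force the diagonal block `H_{i₀ i₀}` to be the all-ones matrix. Hence, with `e` the
indicator vector of the `i₀`-th block, `K = H + (c - 1) e eᵀ`. The row sums also say
`H e = m e` and `e ⬝ e = m`, so every cross term of `K Kᴴ` is a multiple of `m e eᵀ`, and
their coefficients add up to `|c|² - 1 = 0`.
-/

open Matrix

theorem Complex.eq_one_of_norm_le_one_of_sum_eq_card {ι : Type*} (s : Finset ι) (f : ι → ℂ)
    (hf : ∀ i ∈ s, ‖f i‖ ≤ 1) (hsum : ∑ i ∈ s, f i = s.card) : ∀ i ∈ s, f i = 1 := by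
  have hre_le : ∀ i ∈ s, (f i).re ≤ 1 := fun i hi => (re_le_norm _).trans (hf i hi)
  have hre_sum : ∑ i ∈ s, (f i).re = ∑ _i ∈ s, (1 : ℝ) := by
    simpa [re_sum] using congrArg Complex.re hsum
  intro i hi
  have hre : (f i).re = 1 := (Finset.sum_eq_sum_iff_of_le hre_le).1 hre_sum i hi
  have hnorm : ‖f i‖ = 1 := le_antisymm (hf i hi) (hre ▸ Complex.re_le_norm _)
  have him : (f i).im = 0 := abs_re_eq_norm.1 (by rw [hre, hnorm, abs_one])
  exact ext hre him

theorem Matrix.add_smul_vecMulVec_mul_conjTranspose {ι R : Type*} [Fintype ι] [CommRing R]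
    [StarRing R] (H : Matrix ι ι R) (e : ι → R) (c : R) (he : star e = e)
    (hee : star (e ⬝ᵥ e) = e ⬝ᵥ e) (hHe : H *ᵥ e = (e ⬝ᵥ e) • e) (hc : c * star c = 1) :
    (H + (c - 1) • vecMulVec e e) * (H + (c - 1) • vecMulVec e e)ᴴ = H * Hᴴ := by
  set k := e ⬝ᵥ e
  have hHE : H * vecMulVec e e = k • vecMulVec e e := by
    rw [mul_vecMulVec, hHe, smul_vecMulVec]
  have hEH : vecMulVec e e * Hᴴ = k • vecMulVec e e := by
    rw [← conjTranspose_conjTranspose (vecMulVec e e), ← conjTranspose_mul,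
      conjTranspose_vecMulVec, he, hHE, conjTranspose_smul, hee, conjTranspose_vecMulVec, he]
  have hEE : vecMulVec e e * vecMulVec e e = k • vecMulVec e e := by
    rw [vecMulVec_mul_vecMulVec, vecMulVec_smul]
  rw [conjTranspose_add, conjTranspose_smul, conjTranspose_vecMulVec, he]
  simp only [add_mul, mul_add, Matrix.smul_mul, Matrix.mul_smul, hHE, hEH, hEE, smul_smul,
    star_sub, star_one]
  linear_combination (norm := module) hc • (k • vecMulVec e e)

def blockIndicator {ι κ R : Type*} [DecidableEq ι] [Zero R] [One R] (i₀ : ι) : ι × κ → R :=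
  fun p => if p.1 = i₀ then 1 else 0

section blockIndicator

variable {ι κ R : Type*} [DecidableEq ι] [NonAssocSemiring R]

theorem star_blockIndicator [StarRing R] (i₀ : ι) :
    star (blockIndicator i₀ : ι × κ → R) = blockIndicator i₀ := by
  ext p
  simp only [blockIndicator, Pi.star_apply]
  split_ifs <;> simp

theorem vecMulVec_blockIndicator_apply (i₀ i j : ι) (t u : κ) :
    vecMulVec (blockIndicator i₀ : ι × κ → R) (blockIndicator i₀) (i, t) (j, u) =
      if i = i₀ ∧ j = i₀ then 1 else 0 := by
  simp only [vecMulVec_apply, blockIndicator]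
  split_ifs <;> simp_all

variable [Fintype ι] [Fintype κ]

theorem blockIndicator_dotProduct_self (i₀ : ι) :
    (blockIndicator i₀ : ι × κ → R) ⬝ᵥ blockIndicator i₀ = Fintype.card κ := by
  simp [dotProduct, blockIndicator, Fintype.sum_prod_type]

theorem mulVec_blockIndicator_apply {ι' : Type*} (H : Matrix ι' (ι × κ) R) (i₀ : ι) (p : ι') :
    (H *ᵥ blockIndicator i₀) p = ∑ u, H p (i₀, u) := by
  simp only [mulVec, dotProduct, blockIndicator, Fintype.sum_prod_type, mul_ite, mul_one,
    mul_zero]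
  rw [Fintype.sum_eq_single i₀ fun j hj => by simp [hj]]
  simp

end blockIndicator

theorem stmt_17_general (m n : ℕ) (H : Matrix (Fin n × Fin m) (Fin n × Fin m) ℂ)
    (hent : ∀ p q, ‖H p q‖ = 1)
    (hHad : H * H.conjTranspose = ((m * n : ℕ) : ℂ) • 1)
    (hBushRow : ∀ (i j : Fin n) (t : Fin m),
      ∑ u : Fin m, H (i, t) (j, u) = if i = j then (m : ℂ) else 0)
    (i₀ : Fin n) (c : ℂ) (hc : ‖c‖ = 1)
    (K : Matrix (Fin n × Fin m) (Fin n × Fin m) ℂ)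
    (hK : ∀ (i j : Fin n) (t u : Fin m), K (i, t) (j, u) =
      if i = i₀ ∧ j = i₀ then c * H (i, t) (j, u) else H (i, t) (j, u)) :
    (∀ p q, ‖K p q‖ = 1) ∧
      K * K.conjTranspose = ((m * n : ℕ) : ℂ) • 1 := by
  set e : Fin n × Fin m → ℂ := blockIndicator i₀
  have hdiag : ∀ t u, H (i₀, t) (i₀, u) = 1 := fun t u =>
    Complex.eq_one_of_norm_le_one_of_sum_eq_card Finset.univ (fun u => H (i₀, t) (i₀, u))
      (fun u _ => (hent _ _).le) (by simpa using hBushRow i₀ i₀ t) u (Finset.mem_univ u)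
  have hKeq : K = H + (c - 1) • vecMulVec e e := by
    ext ⟨i, t⟩ ⟨j, u⟩
    rw [hK, Matrix.add_apply, Matrix.smul_apply, vecMulVec_blockIndicator_apply]
    split_ifs with h
    · obtain ⟨rfl, rfl⟩ := h
      simp [hdiag]
    · simp
  have hHe : H *ᵥ e = (e ⬝ᵥ e) • e := by
    ext ⟨i, t⟩
    rw [mulVec_blockIndicator_apply, hBushRow, blockIndicator_dotProduct_self]
    simp [e, blockIndicator]
  have hcc : c * star c = 1 := by
    simp [Complex.mul_conj, Complex.normSq_eq_norm_sq, hc]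
  refine ⟨fun ⟨i, t⟩ ⟨j, u⟩ => ?_, ?_⟩
  · rw [hK]
    split_ifs <;> simp [hc, hent]
  · rw [hKeq, add_smul_vecMulVec_mul_conjTranspose H e c (star_blockIndicator i₀)
      (by simp [e, blockIndicator_dotProduct_self]) hHe hcc, hHad]

/-- Weak Bush-type switching: if a complex Hadamard matrix of order `mn`, with rows and
columns indexed by `Fin n × Fin m` (block index, position), is of weak Bush type — every
row and column of the block `H_{ij}` sums to `m` if `i = j` and to `0` otherwise — then
multiplying all entries of a diagonal block `H_{i₀ i₀}` by a unimodular constant `c`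
yields a complex Hadamard matrix of order `mn`. -/
theorem stmt_17 (m n : ℕ) (H : Matrix (Fin n × Fin m) (Fin n × Fin m) ℂ)
    (hent : ∀ p q, ‖H p q‖ = 1)
    (hHad : H * H.conjTranspose = ((m * n : ℕ) : ℂ) • 1)
    (hBushRow : ∀ (i j : Fin n) (t : Fin m),
      ∑ u : Fin m, H (i, t) (j, u) = if i = j then (m : ℂ) else 0)
    (hBushCol : ∀ (i j : Fin n) (u : Fin m),
      ∑ t : Fin m, H (i, t) (j, u) = if i = j then (m : ℂ) else 0)
    (i₀ : Fin n) (c : ℂ) (hc : ‖c‖ = 1)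
    (K : Matrix (Fin n × Fin m) (Fin n × Fin m) ℂ)
    (hK : ∀ (i j : Fin n) (t u : Fin m), K (i, t) (j, u) =
      if i = i₀ ∧ j = i₀ then c * H (i, t) (j, u) else H (i, t) (j, u)) :
    (∀ p q, ‖K p q‖ = 1) ∧
      K * K.conjTranspose = ((m * n : ℕ) : ℂ) • 1 :=
  stmt_17_general m n H hent hHad hBushRow i₀ c hc K hK
end

section
/- Let m ≥ 1 and let H be a real Hadamard matrix of order 4m+4 in Hall-set form: with rows and columns indexed by {1,2,3,4} ⊔ ({1,2,3,4} × {1,…,m}), the top-left 4 × 4 block equals 2I₄ − J₄; the first four rows satisfy H(i,(t,u)) = B(i,t) for all u, where B is the 4 × 4 matrix with rows (1,1,1,−1), (1,−1,−1,−1), (1,−1,1,1), (1,1,−1,1); and the first four columns satisfy H((t,u),i) = C(t,i) for all u, where C is the 4 × 4 matrix with rows (1,1,1,1), (−1,1,1,−1), (−1,1,−1,1), (1,1,−1,−1). Write A_{tj} for the m × m block (H((t,u),(j,u′)))_{u,u′}. Then for all t, j ∈ {1,2,3,4}: every row sum and every column sum of A_{tj} equals 2 when t = j and equals 0 when t ≠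 j; consequently m is even. -/
private theorem even_of_pm_sum' (m : ℕ) (f : Fin m → ℝ) (hf : ∀ u, f u = 1 ∨ f u = -1)
    (hs : ∑ u, f u = 2) : Even m := by
  classical
  have hsplit := Finset.sum_filter_add_sum_filter_not Finset.univ (fun u => f u = -1) f
  have h1 : ∑ u ∈ Finset.univ.filter (fun u => f u = -1), f u
      = -((Finset.univ.filter (fun u => f u = -1)).card : ℝ) := by
    rw [Finset.sum_congr rfl (fun u hu => (Finset.mem_filter.mp hu).2)]
    simp
  have h2 : ∑ u ∈ Finset.univ.filter (fun u => ¬ f u = -1), f u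
      = ((Finset.univ.filter (fun u => ¬ f u = -1)).card : ℝ) := by
    rw [Finset.sum_congr rfl (fun u hu => ((hf u).resolve_right (Finset.mem_filter.mp hu).2))]
    simp
  have hcard : (Finset.univ.filter (fun u => f u = -1)).card
      + (Finset.univ.filter (fun u => ¬ f u = -1)).card = m := by
    rw [Finset.card_filter_add_card_filter_not]; simp
  rw [hs, h1, h2] at hsplit
  have hc2 : ((Finset.univ.filter (fun u => f u = -1)).card : ℝ)
      + ((Finset.univ.filter (fun u => ¬ f u = -1)).card : ℝ) = m := by exact_mod_cast hcard
  have : (m : ℝ) = 2 * (Finset.univ.filter (fun u => f u = -1)).card + 2 := by linarith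
  have : m = 2 * (Finset.univ.filter (fun u => f u = -1)).card + 2 := by exact_mod_cast this
  exact ⟨(Finset.univ.filter (fun u => f u = -1)).card + 1, by omega⟩

set_option maxHeartbeats 2000000 in
/-- Hall sets: if a real Hadamard matrix of order `4m+4` (rows and columns indexed by
`Fin 4 ⊕ (Fin 4 × Fin m)`) is in Hall-set form — top-left block `2I₄ - J₄`, first four
rows given by `B ⊗ j_m` and first four columns by `Cᵀ ⊗ j_mᵀ` — then each `m × m` block
`A_{tj}` has all row and column sums equal to `2` when `t = j` and `0` when `t ≠ j`;
consequently `m` is even. -/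
theorem stmt_18 (m : ℕ) (hm : 1 ≤ m)
    (B C : Matrix (Fin 4) (Fin 4) ℝ)
    (hB : B = !![1, 1, 1, -1; 1, -1, -1, -1; 1, -1, 1, 1; 1, 1, -1, 1])
    (hC : C = !![1, 1, 1, 1; -1, 1, 1, -1; -1, 1, -1, 1; 1, 1, -1, -1])
    (H : Matrix (Fin 4 ⊕ Fin 4 × Fin m) (Fin 4 ⊕ Fin 4 × Fin m) ℝ)
    (hent : ∀ p q, H p q = 1 ∨ H p q = -1)
    (hHad : H * H.transpose = ((4 * m + 4 : ℕ) : ℝ) • 1)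
    (hTL : ∀ i i' : Fin 4, H (Sum.inl i) (Sum.inl i') = if i = i' then 1 else -1)
    (hTR : ∀ (i t : Fin 4) (u : Fin m), H (Sum.inl i) (Sum.inr (t, u)) = B i t)
    (hBL : ∀ (t : Fin 4) (u : Fin m) (i : Fin 4), H (Sum.inr (t, u)) (Sum.inl i) = C t i) :
    (∀ t j : Fin 4,
      (∀ u : Fin m, ∑ u' : Fin m, H (Sum.inr (t, u)) (Sum.inr (j, u')) =
        if t = j then 2 else 0) ∧
      (∀ u' : Fin m, ∑ u : Fin m, H (Sum.inr (t, u)) (Sum.inr (j, u')) =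
        if t = j then 2 else 0)) ∧
    Even m := by
  subst hB hC
  have f2 : (⟨2, by omega⟩ : Fin 4) = 2 := rfl
  have f3 : (⟨3, by omega⟩ : Fin 4) = 3 := rfl
  -- transpose identity
  have hc : ((4 * m + 4 : ℕ) : ℝ) ≠ 0 := by positivity
  have hTH : H.transpose * H = ((4 * m + 4 : ℕ) : ℝ) • 1 := by
    have h1 : H * (((4 * m + 4 : ℕ) : ℝ)⁻¹ • H.transpose) = 1 := by
      rw [Matrix.mul_smul, hHad, smul_smul, inv_mul_cancel₀ hc, one_smul]
    have h2 := mul_eq_one_comm.mp h1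
    calc H.transpose * H
        = (((4 * m + 4 : ℕ) : ℝ) • (((4 * m + 4 : ℕ) : ℝ)⁻¹ • H.transpose)) * H := by
          rw [smul_smul, mul_inv_cancel₀ hc, one_smul]
      _ = ((4 * m + 4 : ℕ) : ℝ) • 1 := by rw [Matrix.smul_mul, h2]
  -- row sums
  have rowsum : ∀ t j : Fin 4, ∀ u : Fin m,
      ∑ u' : Fin m, H (Sum.inr (t, u)) (Sum.inr (j, u')) = if t = j then 2 else 0 := by
    intro t j u
    have key : ∀ i : Fin 4,
        ∑ i' : Fin 4, H (Sum.inl i) (Sum.inl i') * H (Sum.inr (t,u)) (Sum.inl i')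
        + ∑ jj : Fin 4, ∑ u' : Fin m,
            H (Sum.inl i) (Sum.inr (jj,u')) * H (Sum.inr (t,u)) (Sum.inr (jj,u')) = 0 := by
      intro i
      have h := congrFun (congrFun hHad (Sum.inl i)) (Sum.inr (t,u))
      simp [Matrix.mul_apply, Matrix.one_apply, Fintype.sum_sum_type,
        Fintype.sum_prod_type] at h
      linarith [h]
    simp only [hTL, hTR, hBL, ← Finset.mul_sum] at key
    have e0 := key 0; have e1 := key 1; have e2 := key 2; have e3 := key 3
    clear key
    fin_cases t <;> fin_cases j <;>
      simp (config := { decide := true }) [f2, f3, Fin.sum_univ_four, Matrix.cons_val_zero,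
        Matrix.cons_val_one, Matrix.head_cons, Matrix.cons_val_two, Matrix.tail_cons,
        Matrix.cons_val_three] at e0 e1 e2 e3 ⊢ <;>
      linarith
  -- column sums
  have colsum : ∀ t j : Fin 4, ∀ u' : Fin m,
      ∑ u : Fin m, H (Sum.inr (t, u)) (Sum.inr (j, u')) = if t = j then 2 else 0 := by
    intro t j u'
    have key : ∀ i : Fin 4,
        ∑ i' : Fin 4, H (Sum.inl i') (Sum.inl i) * H (Sum.inl i') (Sum.inr (j,u'))
        + ∑ tt : Fin 4, ∑ u : Fin m,
            H (Sum.inr (tt,u)) (Sum.inl i) * H (Sum.inr (tt,u)) (Sum.inr (j,u')) = 0 := by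
      intro i
      have h := congrFun (congrFun hTH (Sum.inl i)) (Sum.inr (j,u'))
      simp [Matrix.mul_apply, Matrix.transpose_apply, Matrix.one_apply, Fintype.sum_sum_type,
        Fintype.sum_prod_type] at h
      linarith [h]
    simp only [hTL, hTR, hBL, ← Finset.mul_sum] at key
    have e0 := key 0; have e1 := key 1; have e2 := key 2; have e3 := key 3
    clear key
    fin_cases t <;> fin_cases j <;>
      simp (config := { decide := true }) [f2, f3, Fin.sum_univ_four, Matrix.cons_val_zero,
        Matrix.cons_val_one, Matrix.head_cons, Matrix.cons_val_two, Matrix.tail_cons,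
        Matrix.cons_val_three, Matrix.vecHead, Matrix.vecTail] at e0 e1 e2 e3 ⊢ <;>
      linarith
  refine ⟨fun t j => ⟨rowsum t j, colsum t j⟩, ?_⟩
  have u0 : Fin m := ⟨0, hm⟩
  refine even_of_pm_sum' m (fun u' => H (Sum.inr (0, u0)) (Sum.inr (0, u'))) (fun u' => hent _ _) ?_
  simpa using rowsum 0 0 u0
end

section
/- Let m ≥ 1 and let H be a real Hadamard matrix of order 4m+4 in Hall-set form: with rows and columns indexed by {1,2,3,4} ⊔ ({1,2,3,4} × {1,…,m}), the top-left 4 × 4 block equals 2I₄ − J₄; the first four rows satisfy H(i,(t,u)) = B(i,t) for all u, where B is the 4 × 4 matrix with rows (1,1,1,−1), (1,−1,−1,−1), (1,−1,1,1), (1,1,−1,1); and the first four columns satisfy H((t,u),i) = C(t,i) for all u, where C is the 4 × 4 matrix with rows (1,1,1,1), (−1,1,1,−1), (−1,1,−1,1), (1,1,−1,−1). Then for any j ∈ {1,2,3,4}, the matrix K obtained from H by negating every entry H(i,(j,u)) with i ∈ {1,2,3,4} (the j-th 4 × m block in the first four rows) and simultaneously negating every entry H((j,u),i) with i ∈ {1,2,3,4}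 (the j-th m × 4 block in the first four columns), leaving all other entries unchanged, is a real Hadamard matrix of order 4m+4. -/
/-!
Write `H` in block form with top-left block `A = 2I₄ - J₄`, top-right block `B ⊗ jₘᵀ` (each
column of `B` repeated `m` times), bottom-left block `C ⊗ jₘ` and bottom-right block `D`.
Switching the `j₀`-th blocks replaces `B` by `BΔ` and `C` by `ΔC`, where `Δ = diag(±1)`; since
`Δ² = 1` and `CCᵀ = 4I`, the diagonal blocks of `KKᵀ` are those of `HHᵀ`. For the off-diagonal
block, let `E = I₄ ⊗ jₘᵀ` be the incidence matrix of the partition into blocks. Orthogonality of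
the first four rows of `H` to the others reads `B (E Dᵀ - 2E) = 0` (using `ACᵀ = -2B`), and `B` is
invertible, so `E Dᵀ = 2E`. The off-diagonal block of `KKᵀ` is `BΔ (E Dᵀ - 2E)`, hence `0` too.
-/

open Matrix

section Submatrix

variable {ι μ κ ν R : Type*} [Fintype ι] [Semiring R]

theorem submatrix_id_fst_mul_transpose [Fintype μ] (M N : Matrix κ ι R) :
    M.submatrix id (Prod.fst : ι × μ → ι) * (N.submatrix id (Prod.fst : ι × μ → ι))ᵀ =
      (Fintype.card μ : R) • (M * Nᵀ) := by
  ext k k'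
  rw [mul_apply, Fintype.sum_prod_type]
  simp [mul_apply, Finset.mul_sum]

theorem submatrix_mul_transpose_submatrix_id (M N : Matrix κ ι R) (f : μ → κ) (g : ν → κ) :
    M.submatrix f id * (N.submatrix g id)ᵀ = (M * Nᵀ).submatrix f g := by
  ext; simp [mul_apply]

theorem mul_transpose_submatrix_id (M N : Matrix κ ι R) (f : μ → κ) :
    M * (N.submatrix f id)ᵀ = (M * Nᵀ).submatrix id f := by
  ext; simp [mul_apply]

theorem submatrix_id_eq_mul_one_submatrix [DecidableEq ι] (M : Matrix κ ι R) (f : μ → ι) :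
    M.submatrix id f = M * (1 : Matrix ι ι R).submatrix id f :=
  (mul_submatrix_one (Equiv.refl ι) f M).symm

end Submatrix

section HallForm

variable {ι μ R : Type*}

def hallForm (A B C : Matrix ι ι R) (D : Matrix (ι × μ) (ι × μ) R) :
    Matrix (ι ⊕ ι × μ) (ι ⊕ ι × μ) R :=
  fromBlocks A (B.submatrix id Prod.fst) (C.submatrix Prod.fst id) D

theorem eq_hallForm {H : Matrix (ι ⊕ ι × μ) (ι ⊕ ι × μ) R} {A B C : Matrix ι ι R}
    {D : Matrix (ι × μ) (ι × μ) R} (hA : ∀ i i', H (.inl i) (.inl i') = A i i')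
    (hB : ∀ i t u, H (.inl i) (.inr (t, u)) = B i t)
    (hC : ∀ t u i, H (.inr (t, u)) (.inl i) = C t i)
    (hD : ∀ p q, H (.inr p) (.inr q) = D p q) :
    H = hallForm A B C D := by
  ext (i | ⟨t, u⟩) (i' | ⟨t', u'⟩) <;> simp [hallForm, hA, hB, hC, hD]

variable [Fintype ι] [Fintype μ]

theorem hallForm_mul_transpose [CommSemiring R] (A B C : Matrix ι ι R)
    (D : Matrix (ι × μ) (ι × μ) R) :
    hallForm A B C D * (hallForm A B C D)ᵀ =
      fromBlocks (A * Aᵀ + (Fintype.card μ : R) • (B * Bᵀ))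
        ((A * Cᵀ).submatrix id Prod.fst + B.submatrix id (Prod.fst : ι × μ → ι) * Dᵀ)
        ((A * Cᵀ).submatrix id Prod.fst + B.submatrix id (Prod.fst : ι × μ → ι) * Dᵀ)ᵀ
        ((C * Cᵀ).submatrix Prod.fst Prod.fst + D * Dᵀ) := by
  simp only [hallForm, fromBlocks_transpose, fromBlocks_multiply, submatrix_id_fst_mul_transpose,
    submatrix_mul_transpose_submatrix_id, mul_transpose_submatrix_id, transpose_add, transpose_mul]
  congr 1
  ext
  simp [mul_apply, mul_comm]

variable [CommRing R] [DecidableEq ι]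

/-- Row `(t', u')` of `D` sums to `-c` over the block `{t'} × μ` and to `0` over the others. -/
theorem one_submatrix_mul_transpose_of_hallForm {A B C : Matrix ι ι R}
    {D : Matrix (ι × μ) (ι × μ) R} {c : R} (hB : IsUnit B) (hAC : A * Cᵀ = c • B)
    (hH : (hallForm A B C D * (hallForm A B C D)ᵀ).toBlocks₁₂ = 0) :
    (1 : Matrix ι ι R).submatrix id (Prod.fst : ι × μ → ι) * Dᵀ =
      -c • (1 : Matrix ι ι R).submatrix id Prod.fst := by
  obtain ⟨B', hB'⟩ := hB.exists_left_inv
  rw [hallForm_mul_transpose, toBlocks_fromBlocks₁₂, hAC, submatrix_id_eq_mul_one_submatrix,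
    submatrix_id_eq_mul_one_submatrix B, smul_mul, Matrix.mul_assoc, ← Matrix.mul_smul,
    ← Matrix.mul_add] at hH
  have hcancel := congrArg (B' * ·) hH
  simp only [← Matrix.mul_assoc, hB', Matrix.one_mul, Matrix.mul_zero] at hcancel
  rw [neg_smul, eq_neg_iff_add_eq_zero, add_comm, hcancel]

theorem hallForm_switch_mul_transpose {A B C : Matrix ι ι R} {D : Matrix (ι × μ) (ι × μ) R}
    {c d : R} {s : ι → R} (hs : ∀ t, s t * s t = 1) (hB : IsUnit B) (hAC : A * Cᵀ = c • B)
    (hCC : C * Cᵀ = d • 1) (hH : (hallForm A B C D * (hallForm A B C D)ᵀ).toBlocks₁₂ = 0) :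
    hallForm A (B * diagonal s) (diagonal s * C) D *
        (hallForm A (B * diagonal s) (diagonal s * C) D)ᵀ =
      hallForm A B C D * (hallForm A B C D)ᵀ := by
  have hE := one_submatrix_mul_transpose_of_hallForm hB hAC hH
  have hΔ : diagonal s * diagonal s = 1 := by
    rw [diagonal_mul_diagonal, ← diagonal_one]
    exact congrArg diagonal (funext hs)
  rw [hallForm_mul_transpose, toBlocks_fromBlocks₁₂] at hH
  have hBB : B * diagonal s * (B * diagonal s)ᵀ = B * Bᵀ := by
    rw [transpose_mul, diagonal_transpose, Matrix.mul_assoc, ← Matrix.mul_assoc (diagonal s), hΔ,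
      Matrix.one_mul]
  have hCC' : diagonal s * C * (diagonal s * C)ᵀ = C * Cᵀ := by
    rw [transpose_mul, diagonal_transpose, Matrix.mul_assoc, ← Matrix.mul_assoc C, hCC,
      Matrix.smul_mul, Matrix.one_mul, Matrix.mul_smul, hΔ]
  have hTR : (A * (diagonal s * C)ᵀ).submatrix id Prod.fst +
      (B * diagonal s).submatrix id (Prod.fst : ι × μ → ι) * Dᵀ = 0 := by
    rw [transpose_mul, diagonal_transpose, ← Matrix.mul_assoc, hAC, Matrix.smul_mul,
      submatrix_id_eq_mul_one_submatrix (B * diagonal s), Matrix.mul_assoc, hE, Matrix.mul_smul,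
      ← submatrix_id_eq_mul_one_submatrix, neg_smul]
    exact add_neg_cancel _
  rw [hallForm_mul_transpose, hallForm_mul_transpose, hBB, hCC', hTR, hH]

end HallForm

theorem stmt_19_general (m : ℕ)
    (B C : Matrix (Fin 4) (Fin 4) ℝ)
    (hB : B = !![1, 1, 1, -1; 1, -1, -1, -1; 1, -1, 1, 1; 1, 1, -1, 1])
    (hC : C = !![1, 1, 1, 1; -1, 1, 1, -1; -1, 1, -1, 1; 1, 1, -1, -1])
    (H : Matrix (Fin 4 ⊕ Fin 4 × Fin m) (Fin 4 ⊕ Fin 4 × Fin m) ℝ)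
    (hent : ∀ p q, H p q = 1 ∨ H p q = -1)
    (hHad : H * H.transpose = ((4 * m + 4 : ℕ) : ℝ) • 1)
    (hTL : ∀ i i' : Fin 4, H (Sum.inl i) (Sum.inl i') = if i = i' then 1 else -1)
    (hTR : ∀ (i t : Fin 4) (u : Fin m), H (Sum.inl i) (Sum.inr (t, u)) = B i t)
    (hBL : ∀ (t : Fin 4) (u : Fin m) (i : Fin 4), H (Sum.inr (t, u)) (Sum.inl i) = C t i)
    (j₀ : Fin 4)
    (K : Matrix (Fin 4 ⊕ Fin 4 × Fin m) (Fin 4 ⊕ Fin 4 × Fin m) ℝ)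
    (hKTL : ∀ i i' : Fin 4, K (Sum.inl i) (Sum.inl i') = H (Sum.inl i) (Sum.inl i'))
    (hKTR : ∀ (i t : Fin 4) (u : Fin m), K (Sum.inl i) (Sum.inr (t, u)) =
      if t = j₀ then -H (Sum.inl i) (Sum.inr (t, u)) else H (Sum.inl i) (Sum.inr (t, u)))
    (hKBL : ∀ (t : Fin 4) (u : Fin m) (i : Fin 4), K (Sum.inr (t, u)) (Sum.inl i) =
      if t = j₀ then -H (Sum.inr (t, u)) (Sum.inl i) else H (Sum.inr (t, u)) (Sum.inl i))
    (hKBR : ∀ (t t' : Fin 4) (u u' : Fin m),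
      K (Sum.inr (t, u)) (Sum.inr (t', u')) = H (Sum.inr (t, u)) (Sum.inr (t', u'))) :
    (∀ p q, K p q = 1 ∨ K p q = -1) ∧
      K * K.transpose = ((4 * m + 4 : ℕ) : ℝ) • 1 := by
  have hKH : ∀ p q, K p q = H p q ∨ K p q = -H p q := by
    rintro (i | ⟨t, u⟩) (i' | ⟨t', u'⟩)
    · simp [hKTL]
    · rw [hKTR]; split_ifs <;> simp
    · rw [hKBL]; split_ifs <;> simp
    · simp [hKBR]
  refine ⟨fun p q => ?_, ?_⟩
  · rcases hKH p q with h | h <;> rcases hent p q with h' | h' <;> simp [h, h']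
  set A : Matrix (Fin 4) (Fin 4) ℝ := of fun i i' => if i = i' then 1 else -1
  set s : Fin 4 → ℝ := fun t => if t = j₀ then -1 else 1
  have hs : ∀ t, s t * s t = 1 := fun t => by by_cases t = j₀ <;> simp [s, *]
  have hAC : A * Cᵀ = (-2 : ℝ) • B := by
    subst hB hC
    ext i j; fin_cases i <;> fin_cases j <;> simp [A, mul_apply, Fin.sum_univ_four] <;> norm_num
  have hCC : C * Cᵀ = (4 : ℝ) • 1 := by
    subst hC
    ext i j; fin_cases i <;> fin_cases j <;> simp [mul_apply, Fin.sum_univ_four] <;> norm_num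
  have hBunit : IsUnit B := by
    rw [isUnit_iff_isUnit_det]
    refine isUnit_det_of_left_inverse (B := (4⁻¹ : ℝ) • Bᵀ) ?_
    subst hB
    ext i j; fin_cases i <;> fin_cases j <;> simp [mul_apply, Fin.sum_univ_four] <;> norm_num
  have hHform : H = hallForm A B C H.toBlocks₂₂ :=
    eq_hallForm (by simpa [A] using hTL) hTR hBL fun _ _ => rfl
  have hKform : K = hallForm A (B * diagonal s) (diagonal s * C) H.toBlocks₂₂ :=
    eq_hallForm (by simpa [A, hKTL] using hTL) (by simp [hKTR, hTR, s]) (by simp [hKBL, hBL, s])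
      fun p q => hKBR p.1 q.1 p.2 q.2
  have hH : (hallForm A B C H.toBlocks₂₂ * (hallForm A B C H.toBlocks₂₂)ᵀ).toBlocks₁₂ = 0 := by
    rw [← hHform, hHad]; ext; simp [toBlocks₁₂]
  rw [hKform, hallForm_switch_mul_transpose hs hBunit hAC hCC hH, ← hHform, hHad]

/-- Switching a Hall set: if a real Hadamard matrix of order `4m+4` (rows and columns
indexed by `Fin 4 ⊕ (Fin 4 × Fin m)`) is in Hall-set form — top-left block `2I₄ - J₄`,
first four rows given by `B ⊗ j_m` and first four columns by `Cᵀ ⊗ j_mᵀ` — then negating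
the `j₀`-th `4 × m` block in the first four rows and simultaneously the `j₀`-th `m × 4`
block in the first four columns yields a real Hadamard matrix of order `4m+4`. -/
theorem stmt_19 (m : ℕ) (hm : 1 ≤ m)
    (B C : Matrix (Fin 4) (Fin 4) ℝ)
    (hB : B = !![1, 1, 1, -1; 1, -1, -1, -1; 1, -1, 1, 1; 1, 1, -1, 1])
    (hC : C = !![1, 1, 1, 1; -1, 1, 1, -1; -1, 1, -1, 1; 1, 1, -1, -1])
    (H : Matrix (Fin 4 ⊕ Fin 4 × Fin m) (Fin 4 ⊕ Fin 4 × Fin m) ℝ)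
    (hent : ∀ p q, H p q = 1 ∨ H p q = -1)
    (hHad : H * H.transpose = ((4 * m + 4 : ℕ) : ℝ) • 1)
    (hTL : ∀ i i' : Fin 4, H (Sum.inl i) (Sum.inl i') = if i = i' then 1 else -1)
    (hTR : ∀ (i t : Fin 4) (u : Fin m), H (Sum.inl i) (Sum.inr (t, u)) = B i t)
    (hBL : ∀ (t : Fin 4) (u : Fin m) (i : Fin 4), H (Sum.inr (t, u)) (Sum.inl i) = C t i)
    (j₀ : Fin 4)
    (K : Matrix (Fin 4 ⊕ Fin 4 × Fin m) (Fin 4 ⊕ Fin 4 × Fin m) ℝ)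
    (hKTL : ∀ i i' : Fin 4, K (Sum.inl i) (Sum.inl i') = H (Sum.inl i) (Sum.inl i'))
    (hKTR : ∀ (i t : Fin 4) (u : Fin m), K (Sum.inl i) (Sum.inr (t, u)) =
      if t = j₀ then -H (Sum.inl i) (Sum.inr (t, u)) else H (Sum.inl i) (Sum.inr (t, u)))
    (hKBL : ∀ (t : Fin 4) (u : Fin m) (i : Fin 4), K (Sum.inr (t, u)) (Sum.inl i) =
      if t = j₀ then -H (Sum.inr (t, u)) (Sum.inl i) else H (Sum.inr (t, u)) (Sum.inl i))
    (hKBR : ∀ (t t' : Fin 4) (u u' : Fin m),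
      K (Sum.inr (t, u)) (Sum.inr (t', u')) = H (Sum.inr (t, u)) (Sum.inr (t', u'))) :
    (∀ p q, K p q = 1 ∨ K p q = -1) ∧
      K * K.transpose = ((4 * m + 4 : ℕ) : ℝ) • 1 :=
  stmt_19_general m B C hB hC H hent hHad hTL hTR hBL j₀ K hKTL hKTR hKBL hKBR
end
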